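/- arXiv:2409.04076 — 5 statements merged into one kernel-verified Lean document; each statement's English description precedes it below -/
import Mathlib

section
/- Fix integers x_1 > x_2 > … > x_ℓ > 0 and positive integers r_1, …, r_ℓ, and assume every r_i is even. Then every NCP of B_λ = {0, 2x_1, …, 2x_ℓ} is an even NCP, and the set of subgroups {A_𝓛 : 𝓛 an NCP of B_λ} of A = (ℤ/2ℤ)^ℓ equals the set {H_σ : σ a Temperley–Lieb pattern of {1, 2, …, 2ℓ+1}}, where H_σ ⊆ A is generated by the elements t_{i_1} t_{i_2} for each block of σ of the form {2i_1, 2(i_2−1)+1} with i_1 < i_2 ≤ ℓ, together with t_j if σ contains the block {2j, 2ℓ+1}. (This proves the conjecture of Lusztig and Sommers.) -/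
/-- `P` is a partition of the finite set `B ⊆ ℕ` into nonempty blocks. -/
def IsPartitionOf (B : Finset ℕ) (P : Finset (Finset ℕ)) : Prop :=
  (∀ L ∈ P, L.Nonempty) ∧ (∀ L ∈ P, L ⊆ B) ∧ ∀ b ∈ B, ∃! L, L ∈ P ∧ b ∈ L

/-- The noncrossing condition on the blocks. -/
def PairwiseNoncrossing (P : Finset (Finset ℕ)) : Prop :=
  ∀ L ∈ P, ∀ L' ∈ P, L ≠ L' →
    ∀ a ∈ L, ∀ b ∈ L, ∀ c ∈ L', ∀ d ∈ L', a ≤ b → c ≤ d →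
      Finset.Icc a b ∩ Finset.Icc c d = ∅ ∨
      Finset.Icc a b ⊆ Finset.Icc c d ∨ Finset.Icc c d ⊆ Finset.Icc a b

/-- A noncrossing partition (NCP) of the finite set `B ⊆ ℕ`. -/
def IsNCP (B : Finset ℕ) (P : Finset (Finset ℕ)) : Prop :=
  IsPartitionOf B P ∧ PairwiseNoncrossing P

/-- `B_λ = {0, 2x₁, …, 2x_ℓ}` (indices `1, …, ℓ`). -/
def Blam (ℓ : ℕ) (x : ℕ → ℕ) : Finset ℕ :=
  insert 0 ((Finset.Icc 1 ℓ).image (fun i => 2 * x i))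

/-- An even NCP of `B_λ`. -/
def IsEvenNCP (ℓ : ℕ) (x r : ℕ → ℕ) (P : Finset (Finset ℕ)) : Prop :=
  IsNCP (Blam ℓ x) P ∧
    ∀ L ∈ P, 0 ∉ L →
      Even (∑ j ∈ (Finset.Icc 1 ℓ).filter (fun j => 2 * x j ∈ L), r j)

/-- The standard generator `t_i` (for `1 ≤ i ≤ ℓ`) of `A = (ℤ/2)^ℓ`, additively. -/
def tgen (ℓ : ℕ) (i : ℕ) : Fin ℓ → ZMod 2 :=
  fun j => if (j : ℕ) + 1 = i then 1 else 0

/-- The subgroup `A_𝓛 ⊆ A` attached to an NCP `𝓛` of `B_λ` with `0 ∈ L₀`. -/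
def ncpSubgroup (ℓ : ℕ) (x : ℕ → ℕ) (P : Finset (Finset ℕ)) :
    AddSubgroup (Fin ℓ → ZMod 2) :=
  AddSubgroup.closure
    ({a | ∃ L ∈ P, 0 ∉ L ∧ ∃ i ∈ Finset.Icc 1 ℓ, ∃ j ∈ Finset.Icc 1 ℓ,
        2 * x i ∈ L ∧ 2 * x j ∈ L ∧ a = tgen ℓ i + tgen ℓ j} ∪
     {a | ∃ L ∈ P, 0 ∈ L ∧ ∃ i ∈ Finset.Icc 1 ℓ, 2 * x i ∈ L ∧ a = tgen ℓ i})

/-- A Temperley–Lieb pattern of `Z`. -/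
def IsTLPattern (Z : Finset ℕ) (σ : Finset (Finset ℕ)) : Prop :=
  IsPartitionOf Z σ ∧ PairwiseNoncrossing σ ∧
  ∃ M0 ∈ σ, ∃ d, Odd d ∧ M0 = ({d} : Finset ℕ) ∧
    ∀ M ∈ σ, M ≠ M0 → ∃ a b, a < b ∧ M = ({a, b} : Finset ℕ) ∧ (b < d ∨ d < a)

/-- For `b ∈ E`, the generator `t_m` for `m` the successor of `b` in `E` (the identity
`0` if `b` is the largest element of `E`). For `E = {1, …, ℓ}` this is `t_{b+1}`, with
`t_{ℓ+1} = 0`. -/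
def nextT (ℓ : ℕ) (E : Finset ℕ) (b : ℕ) : Fin ℓ → ZMod 2 :=
  if h : (E.filter (fun m => b < m)).Nonempty then
    tgen ℓ ((E.filter (fun m => b < m)).min' h)
  else 0

/-- The generators of `H_σ ⊆ A` attached to a TL pattern `σ` of `{1, …, 2ℓ+1}`:
`t_{i₁} + t_{i₂}` for each block `{2i₁, 2(i₂−1)+1}` with `i₁ < i₂ ≤ ℓ`, and `t_j`
if `σ` contains the block `{2j, 2ℓ+1}`. -/
def tlGens (ℓ : ℕ) (E : Finset ℕ) (σ : Finset (Finset ℕ)) : Set (Fin ℓ → ZMod 2) :=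
  {a | ∃ c ∈ E, ∃ d ∈ E, c ≤ d ∧ ({2 * c, 2 * d + 1} : Finset ℕ) ∈ σ ∧
      a = tgen ℓ c + nextT ℓ E d}

namespace LS

/-- blocks of a partition are pairwise disjoint -/
lemma part_disj {B : Finset ℕ} {P : Finset (Finset ℕ)} (hP : IsPartitionOf B P)
    {L L' : Finset ℕ} (hL : L ∈ P) (hL' : L' ∈ P) (hne : L ≠ L') {z : ℕ}
    (hz : z ∈ L) (hz' : z ∈ L') : False := by
  obtain ⟨-, hsub, huniq⟩ := hP
  obtain ⟨W, -, hW⟩ := huniq z (hsub L hL hz)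
  exact hne ((hW L ⟨hL, hz⟩).trans (hW L' ⟨hL', hz'⟩).symm)

lemma use_noncross {P : Finset (Finset ℕ)} (hnc : PairwiseNoncrossing P)
    {L L' : Finset ℕ} (hL : L ∈ P) (hL' : L' ∈ P) (hne : L ≠ L')
    {a b c d : ℕ} (ha : a ∈ L) (hb : b ∈ L) (hc : c ∈ L') (hd : d ∈ L')
    (h1 : a < c) (h2 : c < b) (h3 : b < d) : False := by
  rcases hnc L hL L' hL' hne a ha b hb c hc d hd (by omega) (by omega) with h | h | h
  · have : c ∈ Finset.Icc a b ∩ Finset.Icc c d := by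
      simp [Finset.mem_Icc]; omega
    rw [h] at this; exact absurd this (Finset.notMem_empty c)
  · have := h (Finset.mem_Icc.2 ⟨le_refl a, by omega⟩)
    rw [Finset.mem_Icc] at this; omega
  · have := h (Finset.mem_Icc.2 ⟨by omega, le_refl d⟩)
    rw [Finset.mem_Icc] at this; omega

lemma mk_noncross {B : Finset ℕ} {P : Finset (Finset ℕ)} (hP : IsPartitionOf B P)
    (h : ∀ L ∈ P, ∀ L' ∈ P, L ≠ L' → ∀ a ∈ L, ∀ b ∈ L, ∀ c ∈ L', ∀ d ∈ L',
      ¬(a < c ∧ c < b ∧ b < d)) : PairwiseNoncrossing P := by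
  intro L hL L' hL' hne a ha b hb c hc d hd hab hcd
  have hac : a ≠ c := fun he => part_disj hP hL hL' hne ha (he ▸ hc)
  have had : a ≠ d := fun he => part_disj hP hL hL' hne ha (he ▸ hd)
  have hbc : b ≠ c := fun he => part_disj hP hL hL' hne hb (he ▸ hc)
  have hbd : b ≠ d := fun he => part_disj hP hL hL' hne hb (he ▸ hd)
  have h1 := h L hL L' hL' hne a ha b hb c hc d hd
  have h2 := h L' hL' L hL (Ne.symm hne) c hc d hd a ha b hb
  have : (b < c ∨ d < a) ∨ (c ≤ a ∧ b ≤ d) ∨ (a ≤ c ∧ d ≤ b) := by omega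
  rcases this with h' | h' | h'
  · left
    rw [Finset.eq_empty_iff_forall_notMem]
    intro z hz
    rw [Finset.mem_inter, Finset.mem_Icc, Finset.mem_Icc] at hz
    omega
  · right; left; exact Finset.Icc_subset_Icc h'.1 h'.2
  · right; right; exact Finset.Icc_subset_Icc h'.1 h'.2

/-- explicit-length paths -/
def pathN (r : ℕ → ℕ → Prop) : ℕ → ℕ → ℕ → Prop
  | 0, a, b => a = b
  | n+1, a, b => ∃ w, r a w ∧ pathN r n w b

lemma pathN_append {r : ℕ → ℕ → Prop} :
    ∀ {m n a b c}, pathN r m a b → pathN r n b c → pathN r (m+n) a c := by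
  intro m
  induction m with
  | zero => intro n a b c h1 h2; cases h1; simpa using h2
  | succ k ih =>
    intro n a b c h1 h2
    obtain ⟨w, hw, hp⟩ := h1
    have he : k + 1 + n = (k + n) + 1 := by omega
    rw [he]
    exact ⟨w, hw, ih hp h2⟩

lemma pathN_symm {r : ℕ → ℕ → Prop} (hs : ∀ a b, r a b → r b a) :
    ∀ {n a b}, pathN r n a b → pathN r n b a := by
  intro n
  induction n with
  | zero => intro a b h; exact h.symm
  | succ k ih =>
    intro a b h
    obtain ⟨w, hw, hp⟩ := h
    have : pathN r (k+1) b a := pathN_append (ih hp) ⟨a, hs a w hw, rfl⟩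
    exact this

lemma rtg_iff_pathN {r : ℕ → ℕ → Prop} {a b : ℕ} :
    Relation.ReflTransGen r a b ↔ ∃ n, pathN r n a b := by
  constructor
  · intro h
    induction h with
    | refl => exact ⟨0, rfl⟩
    | tail _ hr ih =>
      obtain ⟨n, hn⟩ := ih
      exact ⟨n+1, pathN_append hn ⟨_, hr, rfl⟩⟩
  · rintro ⟨n, hn⟩
    induction n generalizing a with
    | zero => cases hn; exact Relation.ReflTransGen.refl
    | succ k ih =>
      obtain ⟨w, hw, hp⟩ := hn
      exact Relation.ReflTransGen.head hw (ih hp)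

lemma rtg_symm {r : ℕ → ℕ → Prop} (hs : ∀ a b, r a b → r b a) {a b : ℕ}
    (h : Relation.ReflTransGen r a b) : Relation.ReflTransGen r b a := by
  rw [rtg_iff_pathN] at h ⊢
  obtain ⟨n, hn⟩ := h
  exact ⟨n, pathN_symm hs hn⟩

/-- Lemma C: escaping a region bounded by an edge must pass through an endpoint. -/
lemma lemC {r : ℕ → ℕ → Prop} (hs : ∀ a b, r a b → r b a)
    (hnc : ∀ u1 u2 u3 u4, u1 < u2 → u2 < u3 → u3 < u4 → r u1 u3 → r u2 u4 → False)
    {p q : ℕ} (hpq : r p q) (hplq : p < q) {d : ℕ} (hd : d < p ∨ q < d) :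
    ∀ n c, pathN r n c d → p < c → c < q →
      Relation.ReflTransGen r c p ∨ Relation.ReflTransGen r c q := by
  intro n
  induction n with
  | zero =>
    intro c hp1 h1 h2
    have : c = d := hp1
    omega
  | succ k ih =>
    intro c hp1 h1 h2
    obtain ⟨w, hrel, hp⟩ := hp1
    by_cases hwp : w = p
    · exact Or.inl (hwp ▸ Relation.ReflTransGen.single hrel)
    by_cases hwq : w = q
    · exact Or.inr (hwq ▸ Relation.ReflTransGen.single hrel)
    rcases lt_trichotomy w p with hw | hw | hw
    · exact absurd (hnc w p c q hw h1 h2 (hs _ _ hrel) hpq) not_false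
    · omega
    · rcases lt_trichotomy w q with hw2 | hw2 | hw2
      · rcases ih w hp hw hw2 with h | h
        · exact Or.inl (Relation.ReflTransGen.head hrel h)
        · exact Or.inr (Relation.ReflTransGen.head hrel h)
      · omega
      · exact absurd (hnc p c q w h1 h2 hw2 hpq hrel) not_false

/-- Main noncrossing-closure lemma. -/
lemma nc_closure_aux {r : ℕ → ℕ → Prop} (hs : ∀ a b, r a b → r b a)
    (hnc : ∀ u1 u2 u3 u4, u1 < u2 → u2 < u3 → u3 < u4 → r u1 u3 → r u2 u4 → False) :
    ∀ n n1 n2 u1 u2 u3 u4, n1 + n2 ≤ n → u1 < u2 → u2 < u3 → u3 < u4 →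
      pathN r n1 u1 u3 → pathN r n2 u2 u4 → Relation.ReflTransGen r u1 u2 := by
  intro n
  induction n with
  | zero =>
    intro n1 n2 u1 u2 u3 u4 hle h12 h23 h34 hp1 hp2
    have hn1 : n1 = 0 := by omega
    subst hn1
    have : u1 = u3 := hp1
    omega
  | succ N ih =>
    intro n1 n2 u1 u2 u3 u4 hle h12 h23 h34 hp1 hp2
    rcases n1 with _ | k
    · have : u1 = u3 := hp1
      omega
    obtain ⟨w, hw, hp⟩ := hp1
    by_cases hwu2 : w = u2
    · exact Relation.ReflTransGen.single (hwu2 ▸ hw)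
    by_cases hwu4 : w = u4
    · have h2 : Relation.ReflTransGen r u4 u2 :=
        rtg_iff_pathN.2 ⟨n2, pathN_symm hs hp2⟩
      exact Relation.ReflTransGen.head (hwu4 ▸ hw) h2
    rcases Nat.eq_zero_or_pos k with hk | hk
    · subst hk
      have hw3 : w = u3 := hp
      rw [hw3] at hw
      rcases lemC hs hnc hw (by omega : u1 < u3) (Or.inr h34) n2 u2 hp2 h12 h23 with h | h
      · exact rtg_symm hs h
      · exact Relation.ReflTransGen.trans (Relation.ReflTransGen.single hw) (rtg_symm hs h)
    · rcases lt_trichotomy w u2 with hcmp | hcmp | hcmp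
      · have := ih k n2 w u2 u3 u4 (by omega) hcmp h23 h34 hp hp2
        exact Relation.ReflTransGen.head hw this
      · omega
      · rcases lt_trichotomy w u4 with hcmp2 | hcmp2 | hcmp2
        · exact ih 1 n2 u1 u2 w u4 (by omega) h12 hcmp hcmp2 ⟨w, hw, rfl⟩ hp2
        · omega
        · have hwp : pathN r k u3 w := pathN_symm hs hp
          have h23' := ih n2 k u2 u3 u4 w (by omega) h23 h34 hcmp2 hp2 hwp
          have h13 : Relation.ReflTransGen r u1 u3 :=
            Relation.ReflTransGen.head hw (rtg_iff_pathN.2 ⟨k, hp⟩)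
          exact Relation.ReflTransGen.trans h13 (rtg_symm hs h23')


/-! ### owners, rel0, classes -/

def own (p : ℕ) : ℕ := (p + 1) / 2

lemma own_bound {p u : ℕ} (hp : 1 ≤ p) (h : own p = u) : 2*u - 1 ≤ p ∧ p ≤ 2*u ∧ 1 ≤ u := by
  unfold own at h; omega

lemma own_two_mul (u : ℕ) : own (2*u) = u := by unfold own; omega

lemma own_pred (u : ℕ) (h : 1 ≤ u) : own (2*u - 1) = u := by unfold own; omega

def rel0 (σ : Finset (Finset ℕ)) (u v : ℕ) : Prop :=
  ∃ M ∈ σ, (∃ p ∈ M, own p = u) ∧ (∃ q ∈ M, own q = v)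

lemma rel0_symm (σ : Finset (Finset ℕ)) : ∀ a b, rel0 σ a b → rel0 σ b a := by
  rintro a b ⟨M, hM, h1, h2⟩; exact ⟨M, hM, h2, h1⟩

noncomputable def cls (ℓ : ℕ) (σ : Finset (Finset ℕ)) (i : ℕ) : Finset ℕ :=
  @Finset.filter _ (fun j => Relation.ReflTransGen (rel0 σ) i j)
    (Classical.decPred _) (Finset.Icc 1 (ℓ+1))

lemma mem_cls {ℓ : ℕ} {σ : Finset (Finset ℕ)} {i j : ℕ} :
    j ∈ cls ℓ σ i ↔ j ∈ Finset.Icc 1 (ℓ+1) ∧ Relation.ReflTransGen (rel0 σ) i j := by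
  simp [cls]

lemma cls_eq_of_rtg {ℓ : ℕ} {σ : Finset (Finset ℕ)} {i j : ℕ}
    (h : Relation.ReflTransGen (rel0 σ) i j) : cls ℓ σ i = cls ℓ σ j := by
  ext k
  simp only [mem_cls]
  constructor
  · rintro ⟨hk, hr⟩
    exact ⟨hk, Relation.ReflTransGen.trans (rtg_symm (rel0_symm σ) h) hr⟩
  · rintro ⟨hk, hr⟩
    exact ⟨hk, Relation.ReflTransGen.trans h hr⟩

def pos (ℓ : ℕ) (x : ℕ → ℕ) (i : ℕ) : ℕ := if i = ℓ+1 then 0 else 2 * x i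

noncomputable def Pof (ℓ : ℕ) (x : ℕ → ℕ) (σ : Finset (Finset ℕ)) : Finset (Finset ℕ) :=
  (Finset.Icc 1 (ℓ+1)).image (fun i => (cls ℓ σ i).image (pos ℓ x))

section posfacts

variable {ℓ : ℕ} {x : ℕ → ℕ}
  (hx : ∀ i ∈ Finset.Icc 1 ℓ, ∀ j ∈ Finset.Icc 1 ℓ, i < j → x j < x i)
  (hxpos : ∀ i ∈ Finset.Icc 1 ℓ, 0 < x i)

include hx hxpos

lemma pos_lt {i j : ℕ} (hi : i ∈ Finset.Icc 1 (ℓ+1)) (hj : j ∈ Finset.Icc 1 (ℓ+1))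
    (hij : i < j) : pos ℓ x j < pos ℓ x i := by
  rw [Finset.mem_Icc] at hi hj
  unfold pos
  by_cases hj1 : j = ℓ+1
  · rw [if_pos hj1, if_neg (by omega)]
    have := hxpos i (Finset.mem_Icc.2 (by omega))
    omega
  · rw [if_neg hj1, if_neg (by omega)]
    have := hx i (Finset.mem_Icc.2 (by omega)) j (Finset.mem_Icc.2 (by omega)) hij
    omega

lemma pos_inj {i j : ℕ} (hi : i ∈ Finset.Icc 1 (ℓ+1)) (hj : j ∈ Finset.Icc 1 (ℓ+1))
    (hij : pos ℓ x i = pos ℓ x j) : i = j := by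
  rcases lt_trichotomy i j with h | h | h
  · have := pos_lt hx hxpos hi hj h; omega
  · exact h
  · have := pos_lt hx hxpos hj hi h; omega

lemma pos_rev {i j : ℕ} (hi : i ∈ Finset.Icc 1 (ℓ+1)) (hj : j ∈ Finset.Icc 1 (ℓ+1))
    (hij : pos ℓ x i < pos ℓ x j) : j < i := by
  rcases lt_trichotomy j i with h | h | h
  · exact h
  · subst h; exact absurd hij (lt_irrefl _)
  · have := pos_lt hx hxpos hi hj h; omega

omit hx hxpos in
lemma Blam_eq_image : Blam ℓ x = (Finset.Icc 1 (ℓ+1)).image (pos ℓ x) := by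
  ext b
  simp only [Blam, Finset.mem_insert, Finset.mem_image, Finset.mem_Icc]
  constructor
  · rintro (rfl | ⟨i, hi, rfl⟩)
    · exact ⟨ℓ+1, by omega, by simp [pos]⟩
    · exact ⟨i, by omega, by simp [pos]; omega⟩
  · rintro ⟨i, hi, rfl⟩
    by_cases h : i = ℓ+1
    · left; simp [pos, h]
    · right; exact ⟨i, by omega, by simp [pos, h]⟩

lemma Pof_isPartition (σ : Finset (Finset ℕ)) :
    IsPartitionOf (Blam ℓ x) (Pof ℓ x σ) := by
  refine ⟨?_, ?_, ?_⟩
  · rintro L hL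
    simp only [Pof, Finset.mem_image] at hL
    obtain ⟨i, hi, rfl⟩ := hL
    exact ⟨pos ℓ x i, Finset.mem_image_of_mem _ (mem_cls.2 ⟨hi, Relation.ReflTransGen.refl⟩)⟩
  · rintro L hL
    simp only [Pof, Finset.mem_image] at hL
    obtain ⟨i, hi, rfl⟩ := hL
    intro b hb
    simp only [Finset.mem_image] at hb
    obtain ⟨j, hj, rfl⟩ := hb
    rw [Blam_eq_image]
    exact Finset.mem_image_of_mem _ (mem_cls.1 hj).1
  · intro b hb
    rw [Blam_eq_image] at hb
    obtain ⟨i, hi, rfl⟩ := Finset.mem_image.1 hb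
    refine ⟨(cls ℓ σ i).image (pos ℓ x), ⟨⟨Finset.mem_image_of_mem _ hi,
      Finset.mem_image_of_mem _ (mem_cls.2 ⟨hi, Relation.ReflTransGen.refl⟩)⟩, ?_⟩⟩
    rintro L ⟨hL, hbL⟩
    simp only [Pof, Finset.mem_image] at hL
    obtain ⟨k, hk, rfl⟩ := hL
    obtain ⟨j, hj, hji⟩ := Finset.mem_image.1 hbL
    obtain ⟨hjIcc, hkj⟩ := mem_cls.1 hj
    have : j = i := pos_inj hx hxpos hjIcc hi hji
    subst this
    rw [cls_eq_of_rtg hkj]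

/-- crossing positions give a reversed crossing of indices -/
lemma Pof_noncrossing {σ : Finset (Finset ℕ)}
    (hnc : ∀ u1 u2 u3 u4, u1 < u2 → u2 < u3 → u3 < u4 →
      rel0 σ u1 u3 → rel0 σ u2 u4 → False) :
    PairwiseNoncrossing (Pof ℓ x σ) := by
  apply mk_noncross (Pof_isPartition hx hxpos σ)
  intro L hL L' hL' hne a ha b hb c hc d hd ⟨hac, hcb, hbd⟩
  simp only [Pof, Finset.mem_image] at hL hL'
  obtain ⟨i, hi, rfl⟩ := hL
  obtain ⟨i', hi', rfl⟩ := hL'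
  obtain ⟨α, hα, rfl⟩ := Finset.mem_image.1 ha
  obtain ⟨β, hβ, rfl⟩ := Finset.mem_image.1 hb
  obtain ⟨γ, hγ, rfl⟩ := Finset.mem_image.1 hc
  obtain ⟨δ, hδ, rfl⟩ := Finset.mem_image.1 hd
  have hαI := (mem_cls.1 hα).1
  have hβI := (mem_cls.1 hβ).1
  have hγI := (mem_cls.1 hγ).1
  have hδI := (mem_cls.1 hδ).1
  have h1 : γ < α := pos_rev hx hxpos hαI hγI hac
  have h2 : β < γ := pos_rev hx hxpos hγI hβI hcb
  have h3 : δ < β := pos_rev hx hxpos hβI hδI hbd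
  -- quadruple δ < β < γ < α with δ, γ ∈ cls i', β, α ∈ cls i
  have hδγ : Relation.ReflTransGen (rel0 σ) δ γ :=
    Relation.ReflTransGen.trans (rtg_symm (rel0_symm σ) (mem_cls.1 hδ).2) (mem_cls.1 hγ).2
  have hβα : Relation.ReflTransGen (rel0 σ) β α :=
    Relation.ReflTransGen.trans (rtg_symm (rel0_symm σ) (mem_cls.1 hβ).2) (mem_cls.1 hα).2
  obtain ⟨n1, hp1⟩ := rtg_iff_pathN.1 hδγ
  obtain ⟨n2, hp2⟩ := rtg_iff_pathN.1 hβα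
  have hδβ : Relation.ReflTransGen (rel0 σ) δ β :=
    nc_closure_aux (rel0_symm σ) hnc (n1+n2) n1 n2 δ β γ α le_rfl h3 h2 h1 hp1 hp2
  apply hne
  have e1 : cls ℓ σ i = cls ℓ σ i' := by
    rw [cls_eq_of_rtg (mem_cls.1 hβ).2, cls_eq_of_rtg (mem_cls.1 hδ).2 (σ := σ),
      ← cls_eq_of_rtg hδβ]
  rw [e1]

end posfacts


/-! ### TL pattern facts -/

section tl

variable {ℓ : ℕ} {σ : Finset (Finset ℕ)}
  (hσ : IsTLPattern (Finset.Icc 1 (2*ℓ+1)) σ)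

include hσ

lemma tl_card {M : Finset ℕ} (hM : M ∈ σ) : M.card ≤ 2 := by
  obtain ⟨hpart, hnc, M0, hM0, d, hd, hM0e, hpairs⟩ := hσ
  by_cases h : M = M0
  · rw [h, hM0e]; simp
  · obtain ⟨a, b, hab, he, -⟩ := hpairs M hM h
    rw [he, Finset.card_insert_of_notMem (by simp; omega), Finset.card_singleton]

lemma tl_mem_bounds {M : Finset ℕ} (hM : M ∈ σ) {z : ℕ} (hz : z ∈ M) :
    1 ≤ z ∧ z ≤ 2*ℓ+1 := by
  have := hσ.1.2.1 M hM hz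
  rw [Finset.mem_Icc] at this
  omega

lemma rel0_noncross : ∀ u1 u2 u3 u4, u1 < u2 → u2 < u3 → u3 < u4 →
    rel0 σ u1 u3 → rel0 σ u2 u4 → False := by
  intro u1 u2 u3 u4 h12 h23 h34 ⟨M, hM, ⟨p, hp, hop⟩, ⟨q, hq, hoq⟩⟩
    ⟨M', hM', ⟨s, hs, hos⟩, ⟨t, ht, hot⟩⟩
  have hbp := own_bound (tl_mem_bounds hσ hM hp).1 hop
  have hbq := own_bound (tl_mem_bounds hσ hM hq).1 hoq
  have hbs := own_bound (tl_mem_bounds hσ hM' hs).1 hos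
  have hbt := own_bound (tl_mem_bounds hσ hM' ht).1 hot
  by_cases he : M = M'
  · subst he
    have hsub : ({p, s, q} : Finset ℕ) ⊆ M := by
      intro z hz
      simp only [Finset.mem_insert, Finset.mem_singleton] at hz
      rcases hz with rfl | rfl | rfl <;> assumption
    have hcard : ({p, s, q} : Finset ℕ).card = 3 := by
      rw [Finset.card_insert_of_notMem (by simp; omega),
        Finset.card_insert_of_notMem (by simp; omega), Finset.card_singleton]
    have := Finset.card_le_card hsub
    have := tl_card hσ hM
    omega
  · exact use_noncross hσ.2.1 hM hM' he hp hq hs ht (by omega) (by omega) (by omega)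

/-- parity: each pair block of a TL pattern has endpoints of opposite parity -/
lemma tl_parity {M : Finset ℕ} (hM : M ∈ σ) {α β : ℕ} (hαβ : α < β)
    (hMe : M = ({α, β} : Finset ℕ)) : Odd (α + β) := by
  obtain ⟨hpart, hnc, M0, hM0, d, hd, hM0e, hpairs⟩ := id hσ
  have hα : α ∈ M := by rw [hMe]; simp
  have hβ : β ∈ M := by rw [hMe]; simp
  have hα1 : 1 ≤ α := (tl_mem_bounds hσ hM hα).1
  have hβ2 : β ≤ 2*ℓ+1 := (tl_mem_bounds hσ hM hβ).2
  -- M is not the singleton block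
  have hMne : M ≠ M0 := by
    intro h
    rw [hM0e] at h
    have := hMe ▸ h
    have hαd : α ∈ ({d} : Finset ℕ) := by rw [← this]; simp
    have hβd : β ∈ ({d} : Finset ℕ) := by rw [← this]; simp
    simp only [Finset.mem_singleton] at hαd hβd
    omega
  have hdout : β < d ∨ d < α := by
    obtain ⟨a, b, hab, he, hside⟩ := hpairs M hM hMne
    have ha : a ∈ ({α, β} : Finset ℕ) := by rw [← hMe, he]; simp
    have hb : b ∈ ({α, β} : Finset ℕ) := by rw [← hMe, he]; simp
    simp only [Finset.mem_insert, Finset.mem_singleton] at ha hb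
    have : a = α ∧ b = β := by omega
    omega
  -- the blocks inside (α, β)
  classical
  set F := σ.filter (fun M' => M' ⊆ Finset.Ioo α β) with hF
  have hsubblock : ∀ M' ∈ σ, ∀ z ∈ M', z ∈ Finset.Ioo α β → M' ⊆ Finset.Ioo α β := by
    intro M' hM' z hz hzIoo
    rw [Finset.mem_Ioo] at hzIoo
    have hne : M' ≠ M := by
      intro h
      subst h
      have : z ∈ ({α, β} : Finset ℕ) := hMe ▸ hz
      simp only [Finset.mem_insert, Finset.mem_singleton] at this
      omega
    intro z' hz'
    rw [Finset.mem_Ioo]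
    by_contra hcon
    push_neg at hcon
    rcases lt_trichotomy z' α with h' | h' | h'
    · exact use_noncross hnc hM' hM hne hz' hz hα hβ h' hzIoo.1 hzIoo.2
    · exact part_disj hpart hM' hM hne hz' (h' ▸ hα)
    · have hβz' : β ≤ z' := by omega
      rcases eq_or_lt_of_le hβz' with h'' | h''
      · exact part_disj hpart hM' hM hne hz' (h'' ▸ hβ)
      · exact use_noncross hnc hM hM' (Ne.symm hne) hα hβ hz hz' hzIoo.1 hzIoo.2 h''
  have hcover : Finset.Ioo α β = F.biUnion id := by
    ext z
    simp only [Finset.mem_biUnion, hF, Finset.mem_filter, id]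
    constructor
    · intro hz
      have hzZ : z ∈ Finset.Icc 1 (2*ℓ+1) := by
        rw [Finset.mem_Icc]; rw [Finset.mem_Ioo] at hz; omega
      obtain ⟨M', ⟨hM', hzM'⟩, -⟩ := hpart.2.2 z hzZ
      exact ⟨M', ⟨hM', hsubblock M' hM' z hzM' hz⟩, hzM'⟩
    · rintro ⟨M', ⟨hM', hsub⟩, hz⟩
      exact hsub hz
  have hdisj : ∀ M1 ∈ F, ∀ M2 ∈ F, M1 ≠ M2 → Disjoint M1 M2 := by
    intro M1 hM1 M2 hM2 hne12
    rw [Finset.disjoint_left]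
    intro z hz1 hz2
    rw [hF, Finset.mem_filter] at hM1 hM2
    exact part_disj hpart hM1.1 hM2.1 hne12 hz1 hz2
  have hcard2 : ∀ M' ∈ F, M'.card = 2 := by
    intro M' hM'
    rw [hF, Finset.mem_filter] at hM'
    have hne0 : M' ≠ M0 := by
      intro h
      have : d ∈ M' := by rw [h, hM0e]; simp
      have := hM'.2 this
      rw [Finset.mem_Ioo] at this
      omega
    obtain ⟨a, b, hab, he, -⟩ := hpairs M' hM'.1 hne0
    rw [he, Finset.card_insert_of_notMem (by simp; omega), Finset.card_singleton]
  have : (Finset.Ioo α β).card = ∑ M' ∈ F, M'.card := by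
    rw [hcover]
    exact Finset.card_biUnion hdisj
  rw [Nat.card_Ioo, Finset.sum_congr rfl hcard2, Finset.sum_const, smul_eq_mul] at this
  exact ⟨α + F.card, by omega⟩

lemma Pof_isNCP {x : ℕ → ℕ}
    (hx : ∀ i ∈ Finset.Icc 1 ℓ, ∀ j ∈ Finset.Icc 1 ℓ, i < j → x j < x i)
    (hxpos : ∀ i ∈ Finset.Icc 1 ℓ, 0 < x i) :
    IsNCP (Blam ℓ x) (Pof ℓ x σ) :=
  ⟨Pof_isPartition hx hxpos σ, Pof_noncrossing hx hxpos (rel0_noncross hσ)⟩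

end tl


/-! ### subgroup algebra -/

lemma tgen_zero (ℓ : ℕ) {u : ℕ} (hu : ℓ + 1 ≤ u) : tgen ℓ u = 0 := by
  funext j
  have hj := j.isLt
  have : (j : ℕ) + 1 ≠ u := by omega
  simp [tgen, this]

lemma addself {ℓ : ℕ} (a : Fin ℓ → ZMod 2) : a + a = 0 := by
  funext j
  have : ∀ z : ZMod 2, z + z = 0 := by decide
  exact this (a j)

lemma combine {ℓ : ℕ} (a b c : Fin ℓ → ZMod 2) : (a + b) + (b + c) = a + c := by
  rw [add_assoc, ← add_assoc b b c, addself, zero_add]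

lemma nextT_eq (ℓ : ℕ) (dd : ℕ) : nextT ℓ (Finset.Icc 1 ℓ) dd = tgen ℓ (dd + 1) := by
  unfold nextT
  by_cases h : ((Finset.Icc 1 ℓ).filter (fun m => dd < m)).Nonempty
  · rw [dif_pos h]
    have hmin : ((Finset.Icc 1 ℓ).filter (fun m => dd < m)).min' h = dd + 1 := by
      apply le_antisymm
      · apply Finset.min'_le
        simp only [Finset.mem_filter, Finset.mem_Icc]
        obtain ⟨m, hm⟩ := h
        simp only [Finset.mem_filter, Finset.mem_Icc] at hm
        omega
      · apply Finset.le_min'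
        intro y hy
        simp only [Finset.mem_filter, Finset.mem_Icc] at hy
        omega
    rw [hmin]
  · rw [dif_neg h]
    rcases Nat.eq_zero_or_pos ℓ with h0 | h0
    · subst h0
      funext j
      exact absurd j.isLt (by omega)
    · have hld : ℓ ≤ dd := by
        by_contra hc
        exact h ⟨ℓ, by simp only [Finset.mem_filter, Finset.mem_Icc]; omega⟩
      rw [tgen_zero ℓ (by omega)]

section subgrp

variable {ℓ : ℕ} {σ : Finset (Finset ℕ)}
  (hσ : IsTLPattern (Finset.Icc 1 (2*ℓ+1)) σ)

include hσ

lemma region : ∀ n u v, u ≤ v → 1 ≤ u → v ≤ ℓ + 1 → v - u ≤ n →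
    (∀ M ∈ σ, ∀ z ∈ M, 2*u ≤ z → z ≤ 2*v-1 → ∀ z' ∈ M, 2*u ≤ z' ∧ z' ≤ 2*v-1) →
    tgen ℓ u + tgen ℓ v ∈ AddSubgroup.closure (tlGens ℓ (Finset.Icc 1 ℓ) σ) := by
  intro n
  induction n with
  | zero =>
    intro u v h1 h2 h3 h4 hreg
    have : u = v := by omega
    subst this
    rw [addself]
    exact AddSubgroup.zero_mem _
  | succ N ih =>
    intro u v h1 h2 h3 h4 hreg
    rcases eq_or_lt_of_le h1 with heq | hlt
    · subst heq; rw [addself]; exact AddSubgroup.zero_mem _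
    obtain ⟨hpart, hnc, M0, hM0, d, hd, hM0e, hpairs⟩ := id hσ
    have hz : (2*u : ℕ) ∈ Finset.Icc 1 (2*ℓ+1) := by rw [Finset.mem_Icc]; omega
    obtain ⟨M, ⟨hM, hzM⟩, -⟩ := hpart.2.2 (2*u) hz
    have hMne : M ≠ M0 := by
      intro h
      have h2u : (2*u : ℕ) ∈ ({d} : Finset ℕ) := by rw [← hM0e, ← h]; exact hzM
      simp only [Finset.mem_singleton] at h2u
      obtain ⟨m, hm⟩ := hd
      omega
    obtain ⟨a, b, hab, hMe, -⟩ := hpairs M hM hMne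
    obtain ⟨mo, hmo⟩ := tl_parity hσ hM hab hMe
    have hu2 : (2*u : ℕ) ∈ ({a, b} : Finset ℕ) := hMe ▸ hzM
    simp only [Finset.mem_insert, Finset.mem_singleton] at hu2
    obtain ⟨w, hwM, hw⟩ : ∃ w, w ∈ M ∧ w + 2*u = a + b := by
      rcases hu2 with h | h
      · exact ⟨b, by rw [hMe]; simp, by omega⟩
      · exact ⟨a, by rw [hMe]; simp, by omega⟩
    obtain ⟨hw1, hw2⟩ := hreg M hM (2*u) hzM le_rfl (by omega) w hwM
    -- w is odd, w = 2*m+1 with m := mo - u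
    set m := mo - u with hmdef
    have hwm : w = 2*m+1 := by omega
    have h2ua : 2*u = a ∧ w = b := by
      rcases hu2 with h | h
      · exact ⟨h, by omega⟩
      · omega
    have hMeq : M = ({2*u, 2*m+1} : Finset ℕ) := by
      rw [hMe, h2ua.1, ← hwm, h2ua.2]
    have hgen : tgen ℓ u + tgen ℓ (m+1) ∈ tlGens ℓ (Finset.Icc 1 ℓ) σ := by
      refine ⟨u, by rw [Finset.mem_Icc]; omega, m, by rw [Finset.mem_Icc]; omega,
        by omega, ?_, by rw [nextT_eq]⟩
      rwa [← hMeq]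
    have hregE : ∀ M' ∈ σ, ∀ z ∈ M', 2*(m+1) ≤ z → z ≤ 2*v-1 →
        ∀ z' ∈ M', 2*(m+1) ≤ z' ∧ z' ≤ 2*v-1 := by
      intro M' hM' z hzM' hz1 hz2 z' hz'M'
      obtain ⟨hb1, hb2⟩ := hreg M' hM' z hzM' (by omega) hz2 z' hz'M'
      refine ⟨?_, hb2⟩
      by_contra hcon
      push_neg at hcon
      have hM'ne : M' ≠ M := by
        intro h
        rw [h, hMeq] at hzM'
        simp only [Finset.mem_insert, Finset.mem_singleton] at hzM'
        omega
      have hz'ne1 : z' ≠ 2*u := by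
        intro h
        exact part_disj hpart hM' hM hM'ne hz'M' (h ▸ hzM)
      have hz'ne2 : z' ≠ w := by
        intro h
        exact part_disj hpart hM' hM hM'ne hz'M' (h ▸ hwM)
      have : 2*u < z' ∧ z' < w := by omega
      exact use_noncross hnc hM hM' (Ne.symm hM'ne) hzM hwM hz'M' hzM'
        this.1 this.2 (by omega)
    have hih := ih (m+1) v (by omega) (by omega) h3 (by omega) hregE
    have := AddSubgroup.add_mem _ (AddSubgroup.subset_closure hgen) hih
    rwa [combine] at this

lemma step_mem {u v : ℕ} (h : rel0 σ u v) :
    tgen ℓ u + tgen ℓ v ∈ AddSubgroup.closure (tlGens ℓ (Finset.Icc 1 ℓ) σ) := by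
  obtain ⟨M, hM, ⟨p, hp, hop⟩, ⟨q, hq, hoq⟩⟩ := h
  by_cases hpq : p = q
  · have : u = v := by rw [← hop, ← hoq, hpq]
    subst this
    rw [addself]
    exact AddSubgroup.zero_mem _
  obtain ⟨hpart, hnc, M0, hM0, d, hd, hM0e, hpairs⟩ := id hσ
  have hMne : M ≠ M0 := by
    intro h
    rw [h, hM0e] at hp hq
    simp only [Finset.mem_singleton] at hp hq
    exact hpq (hp.trans hq.symm)
  obtain ⟨a, b, hab, hMe, -⟩ := hpairs M hM hMne
  obtain ⟨mo, hmo⟩ := tl_parity hσ hM hab hMe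
  have ha1 : 1 ≤ a := (tl_mem_bounds hσ hM (by rw [hMe]; simp)).1
  have hb2 : b ≤ 2*ℓ+1 := (tl_mem_bounds hσ hM (by rw [hMe]; simp : b ∈ M)).2
  have hcore : tgen ℓ (own a) + tgen ℓ (own b) ∈
      AddSubgroup.closure (tlGens ℓ (Finset.Icc 1 ℓ) σ) := by
    by_cases hae : a % 2 = 0
    · -- a even, b odd: direct generator
      have hova : own a = a/2 := by unfold own; omega
      have hovb : own b = b/2 + 1 := by unfold own; omega
      rw [hova, hovb]
      apply AddSubgroup.subset_closure
      refine ⟨a/2, by rw [Finset.mem_Icc]; omega, b/2, by rw [Finset.mem_Icc]; omega,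
        by omega, ?_, by rw [nextT_eq]⟩
      have e1 : 2 * (a/2) = a := by omega
      have e2 : 2 * (b/2) + 1 = b := by omega
      have : ({2 * (a/2), 2 * (b/2) + 1} : Finset ℕ) = ({a, b} : Finset ℕ) := by
        rw [e1, e2]
      rwa [this, ← hMe]
    · -- a odd, b even: region lemma
      have hova : own a = (a+1)/2 := rfl
      set f := (a+1)/2 with hf
      set g := b/2 with hg
      have hfa : a = 2*f - 1 := by omega
      have hgb : b = 2*g := by omega
      have hovb : own b = g := by unfold own; omega
      rw [hova, hovb]
      apply region hσ (g - f) f g (by omega) (by omega) (by omega) le_rfl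
      intro M' hM' z hzM' hz1 hz2 z' hz'M'
      have hM'ne : M' ≠ M := by
        intro h
        rw [h, hMe] at hzM'
        simp only [Finset.mem_insert, Finset.mem_singleton] at hzM'
        omega
      have hz'nea : z' ≠ a := by
        intro h
        exact part_disj hpart hM' hM hM'ne hz'M' (h ▸ (by rw [hMe]; simp : a ∈ M))
      have hz'neb : z' ≠ b := by
        intro h
        exact part_disj hpart hM' hM hM'ne hz'M' (h ▸ (by rw [hMe]; simp : b ∈ M))
      by_contra hcon
      push_neg at hcon
      have hcase : z' < a ∨ b < z' := by omega
      have haM : a ∈ M := by rw [hMe]; simp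
      have hbM : b ∈ M := by rw [hMe]; simp
      rcases hcase with h' | h'
      · exact use_noncross hnc hM' hM hM'ne hz'M' hzM' haM hbM h' (by omega) (by omega)
      · exact use_noncross hnc hM hM' (Ne.symm hM'ne) haM hbM hzM' hz'M' (by omega) (by omega) h'
  have hpab : p ∈ ({a, b} : Finset ℕ) := hMe ▸ hp
  have hqab : q ∈ ({a, b} : Finset ℕ) := hMe ▸ hq
  simp only [Finset.mem_insert, Finset.mem_singleton] at hpab hqab
  rcases hpab with rfl | rfl <;> rcases hqab with rfl | rfl
  · exact absurd rfl hpq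
  · rw [← hop, ← hoq]; exact hcore
  · rw [← hop, ← hoq, add_comm]; exact hcore
  · exact absurd rfl hpq

lemma rtg_mem {u v : ℕ} (h : Relation.ReflTransGen (rel0 σ) u v) :
    tgen ℓ u + tgen ℓ v ∈ AddSubgroup.closure (tlGens ℓ (Finset.Icc 1 ℓ) σ) := by
  induction h with
  | refl => rw [addself]; exact AddSubgroup.zero_mem _
  | tail hab hbc ih =>
    have := AddSubgroup.add_mem _ ih (step_mem hσ hbc)
    rwa [combine] at this

variable {x : ℕ → ℕ}
  (hx : ∀ i ∈ Finset.Icc 1 ℓ, ∀ j ∈ Finset.Icc 1 ℓ, i < j → x j < x i)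
  (hxpos : ∀ i ∈ Finset.Icc 1 ℓ, 0 < x i)

include hx hxpos

omit hσ in
lemma mem_cls_of_twox {k i : ℕ} (hk : k ∈ Finset.Icc 1 (ℓ+1))
    (hi : i ∈ Finset.Icc 1 ℓ)
    (hxi : 2 * x i ∈ (cls ℓ σ k).image (pos ℓ x)) : i ∈ cls ℓ σ k := by
  obtain ⟨i', hi', hpi⟩ := Finset.mem_image.1 hxi
  have hiI : i ∈ Finset.Icc 1 (ℓ+1) := by
    rw [Finset.mem_Icc] at hi ⊢; omega
  have hpi2 : pos ℓ x i' = pos ℓ x i := by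
    rw [hpi, pos, if_neg (by rw [Finset.mem_Icc] at hi; omega)]
  have := pos_inj hx hxpos (mem_cls.1 hi').1 hiI hpi2
  rwa [← this]

omit hσ in
lemma zero_mem_iff {k : ℕ} (hk : k ∈ Finset.Icc 1 (ℓ+1)) :
    (0 : ℕ) ∈ (cls ℓ σ k).image (pos ℓ x) ↔ (ℓ+1) ∈ cls ℓ σ k := by
  constructor
  · intro h
    obtain ⟨i', hi', hpi⟩ := Finset.mem_image.1 h
    have : pos ℓ x i' = pos ℓ x (ℓ+1) := by rw [hpi, pos, if_pos rfl]
    have := pos_inj hx hxpos (mem_cls.1 hi').1 (by rw [Finset.mem_Icc]; omega) this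
    rwa [← this]
  · intro h
    refine Finset.mem_image.2 ⟨ℓ+1, h, ?_⟩
    rw [pos, if_pos rfl]

lemma Pof_subgroup :
    ncpSubgroup ℓ x (Pof ℓ x σ) =
      AddSubgroup.closure (tlGens ℓ (Finset.Icc 1 ℓ) σ) := by
  unfold ncpSubgroup
  apply le_antisymm
  · rw [AddSubgroup.closure_le]
    intro s hs
    simp only [Set.mem_union, Set.mem_setOf_eq] at hs
    rcases hs with ⟨L, hL, h0, i, hi, j, hj, hxi, hxj, rfl⟩ | ⟨L, hL, h0, i, hi, hxi, rfl⟩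
    · simp only [Pof, Finset.mem_image] at hL
      obtain ⟨k, hk, rfl⟩ := hL
      have hik := mem_cls_of_twox hx hxpos hk hi hxi
      have hjk := mem_cls_of_twox hx hxpos hk hj hxj
      have hrtg : Relation.ReflTransGen (rel0 σ) i j :=
        Relation.ReflTransGen.trans (rtg_symm (rel0_symm σ) (mem_cls.1 hik).2)
          (mem_cls.1 hjk).2
      exact rtg_mem hσ hrtg
    · simp only [Pof, Finset.mem_image] at hL
      obtain ⟨k, hk, rfl⟩ := hL
      have hik := mem_cls_of_twox hx hxpos hk hi hxi
      have hl1 : (ℓ+1) ∈ cls ℓ σ k := (zero_mem_iff hx hxpos hk).1 h0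
      have hrtg : Relation.ReflTransGen (rel0 σ) i (ℓ+1) :=
        Relation.ReflTransGen.trans (rtg_symm (rel0_symm σ) (mem_cls.1 hik).2)
          (mem_cls.1 hl1).2
      have := rtg_mem hσ hrtg
      rwa [tgen_zero ℓ le_rfl, add_zero] at this
  · rw [AddSubgroup.closure_le]
    rintro s ⟨c, hc, dd, hdd, hcd, hMem, rfl⟩
    rw [Finset.mem_Icc] at hc hdd
    have hrel : rel0 σ c (dd+1) := by
      refine ⟨{2*c, 2*dd+1}, hMem, ⟨2*c, by simp, own_two_mul c⟩,
        ⟨2*dd+1, by simp, ?_⟩⟩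
      unfold own; omega
    have hcI : c ∈ Finset.Icc 1 (ℓ+1) := by rw [Finset.mem_Icc]; omega
    have hcK : c ∈ cls ℓ σ c := mem_cls.2 ⟨hcI, Relation.ReflTransGen.refl⟩
    have hdK : (dd+1) ∈ cls ℓ σ c :=
      mem_cls.2 ⟨by rw [Finset.mem_Icc]; omega, Relation.ReflTransGen.single hrel⟩
    have hLP : (cls ℓ σ c).image (pos ℓ x) ∈ Pof ℓ x σ := by
      simp only [Pof, Finset.mem_image]
      exact ⟨c, hcI, rfl⟩
    have hxc : 2 * x c ∈ (cls ℓ σ c).image (pos ℓ x) := by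
      refine Finset.mem_image.2 ⟨c, hcK, ?_⟩
      rw [pos, if_neg (by omega)]
    rw [nextT_eq]
    by_cases h0 : (ℓ+1) ∈ cls ℓ σ c
    · have h0L : (0:ℕ) ∈ (cls ℓ σ c).image (pos ℓ x) := (zero_mem_iff hx hxpos hcI).2 h0
      have hcgen : tgen ℓ c ∈
          ({a | ∃ L ∈ Pof ℓ x σ, 0 ∉ L ∧ ∃ i ∈ Finset.Icc 1 ℓ, ∃ j ∈ Finset.Icc 1 ℓ,
            2 * x i ∈ L ∧ 2 * x j ∈ L ∧ a = tgen ℓ i + tgen ℓ j} ∪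
            {a | ∃ L ∈ Pof ℓ x σ, 0 ∈ L ∧ ∃ i ∈ Finset.Icc 1 ℓ, 2 * x i ∈ L ∧
              a = tgen ℓ i} : Set (Fin ℓ → ZMod 2)) :=
        Or.inr ⟨_, hLP, h0L, c, by rw [Finset.mem_Icc]; omega, hxc, rfl⟩
      by_cases hdl : dd = ℓ
      · rw [hdl, tgen_zero ℓ le_rfl, add_zero]
        exact AddSubgroup.subset_closure hcgen
      · have hxd : 2 * x (dd+1) ∈ (cls ℓ σ c).image (pos ℓ x) := by
          refine Finset.mem_image.2 ⟨dd+1, hdK, ?_⟩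
          rw [pos, if_neg (by omega)]
        have hdgen : tgen ℓ (dd+1) ∈
            ({a | ∃ L ∈ Pof ℓ x σ, 0 ∉ L ∧ ∃ i ∈ Finset.Icc 1 ℓ, ∃ j ∈ Finset.Icc 1 ℓ,
              2 * x i ∈ L ∧ 2 * x j ∈ L ∧ a = tgen ℓ i + tgen ℓ j} ∪
              {a | ∃ L ∈ Pof ℓ x σ, 0 ∈ L ∧ ∃ i ∈ Finset.Icc 1 ℓ, 2 * x i ∈ L ∧
                a = tgen ℓ i} : Set (Fin ℓ → ZMod 2)) :=
          Or.inr ⟨_, hLP, h0L, dd+1, by rw [Finset.mem_Icc]; omega, hxd, rfl⟩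
        exact AddSubgroup.add_mem _ (AddSubgroup.subset_closure hcgen)
          (AddSubgroup.subset_closure hdgen)
    · have hdl : dd < ℓ := by
        by_contra hge
        have he : dd + 1 = ℓ + 1 := by omega
        rw [he] at hdK
        exact h0 hdK
      have h0L : (0:ℕ) ∉ (cls ℓ σ c).image (pos ℓ x) := fun hc0 =>
        h0 ((zero_mem_iff hx hxpos hcI).1 hc0)
      have hxd : 2 * x (dd+1) ∈ (cls ℓ σ c).image (pos ℓ x) := by
        refine Finset.mem_image.2 ⟨dd+1, hdK, ?_⟩
        rw [pos, if_neg (by omega)]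
      exact AddSubgroup.subset_closure
        (Or.inl ⟨_, hLP, h0L, c, by rw [Finset.mem_Icc]; omega, dd+1,
          by rw [Finset.mem_Icc]; omega, hxc, hxd, rfl⟩)

end subgrp


/-! ### forward construction: from an NCP to a TL pattern -/

def iblk (ℓ : ℕ) (x : ℕ → ℕ) (L : Finset ℕ) : Finset ℕ :=
  (Finset.Icc 1 (ℓ+1)).filter (fun i => pos ℓ x i ∈ L)

def minOf (J : Finset ℕ) : ℕ := if h : J.Nonempty then J.min' h else 0
def maxOf (J : Finset ℕ) : ℕ := if h : J.Nonempty then J.max' h else 0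
def predIn (J : Finset ℕ) (j : ℕ) : ℕ := maxOf (J.filter (· < j))
def succIn (J : Finset ℕ) (j : ℕ) : ℕ := minOf (J.filter (fun m => j < m))

def arcAt (ℓ : ℕ) (J : Finset ℕ) (j : ℕ) : Finset ℕ :=
  if j = minOf J then
    (if ℓ+1 ∈ J then {2*j - 1} else {2*j - 1, 2 * maxOf J})
  else {2 * predIn J j, 2*j - 1}

def sigOf (ℓ : ℕ) (x : ℕ → ℕ) (P : Finset (Finset ℕ)) : Finset (Finset ℕ) :=
  (P.image (iblk ℓ x)).biUnion (fun J => J.image (arcAt ℓ J))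

lemma minOf_mem {J : Finset ℕ} (h : J.Nonempty) : minOf J ∈ J := by
  rw [minOf, dif_pos h]; exact J.min'_mem h

lemma minOf_le {J : Finset ℕ} {a : ℕ} (ha : a ∈ J) : minOf J ≤ a := by
  rw [minOf, dif_pos ⟨a, ha⟩]; exact Finset.min'_le J a ha

lemma maxOf_mem {J : Finset ℕ} (h : J.Nonempty) : maxOf J ∈ J := by
  rw [maxOf, dif_pos h]; exact J.max'_mem h

lemma le_maxOf {J : Finset ℕ} {a : ℕ} (ha : a ∈ J) : a ≤ maxOf J := by
  rw [maxOf, dif_pos ⟨a, ha⟩]; exact Finset.le_max' J a ha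

lemma succIn_spec {J : Finset ℕ} {j : ℕ} (hj : j ∈ J) (hne : j ≠ maxOf J) :
    succIn J j ∈ J ∧ j < succIn J j ∧ ∀ a ∈ J, j < a → succIn J j ≤ a := by
  have hmax : maxOf J ∈ J := maxOf_mem ⟨j, hj⟩
  have hjm : j ≤ maxOf J := le_maxOf hj
  have hmem : maxOf J ∈ J.filter (fun m => j < m) :=
    Finset.mem_filter.2 ⟨hmax, lt_of_le_of_ne hjm hne⟩
  have hmm := minOf_mem ⟨_, hmem⟩
  rw [Finset.mem_filter] at hmm
  exact ⟨hmm.1, hmm.2, fun a ha hja => minOf_le (Finset.mem_filter.2 ⟨ha, hja⟩)⟩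

lemma predIn_spec {J : Finset ℕ} {j : ℕ} (hj : j ∈ J) (hne : j ≠ minOf J) :
    predIn J j ∈ J ∧ predIn J j < j ∧ ∀ a ∈ J, a < j → a ≤ predIn J j := by
  have hmin : minOf J ∈ J := minOf_mem ⟨j, hj⟩
  have hjm : minOf J ≤ j := minOf_le hj
  have hmem : minOf J ∈ J.filter (· < j) :=
    Finset.mem_filter.2 ⟨hmin, lt_of_le_of_ne hjm (Ne.symm hne)⟩
  have hmm := maxOf_mem ⟨_, hmem⟩
  rw [Finset.mem_filter] at hmm
  exact ⟨hmm.1, hmm.2, fun a ha haj => le_maxOf (Finset.mem_filter.2 ⟨ha, haj⟩)⟩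

lemma pred_succ {J : Finset ℕ} {j : ℕ} (hj : j ∈ J) (hne : j ≠ maxOf J) :
    predIn J (succIn J j) = j := by
  obtain ⟨hs1, hs2, hs3⟩ := succIn_spec hj hne
  have hsne : succIn J j ≠ minOf J := by
    have := minOf_le hj; omega
  obtain ⟨hp1, hp2, hp3⟩ := predIn_spec hs1 hsne
  have h1 : j ≤ predIn J (succIn J j) := hp3 j hj hs2
  have h2 : predIn J (succIn J j) ≤ j := by
    by_contra hcon
    push_neg at hcon
    exact absurd (hs3 _ hp1 hcon) (by omega)
  omega

lemma succ_pred {J : Finset ℕ} {j : ℕ} (hj : j ∈ J) (hne : j ≠ minOf J) :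
    succIn J (predIn J j) = j := by
  obtain ⟨hp1, hp2, hp3⟩ := predIn_spec hj hne
  have hpne : predIn J j ≠ maxOf J := by
    have := le_maxOf hj; omega
  obtain ⟨hs1, hs2, hs3⟩ := succIn_spec hp1 hpne
  have h1 : succIn J (predIn J j) ≤ j := hs3 j hj hp2
  have h2 : j ≤ succIn J (predIn J j) := by
    by_contra hcon
    push_neg at hcon
    exact absurd (hp3 _ hs1 hcon) (by omega)
  omega

lemma arc_mem_odd {ℓ : ℕ} {J : Finset ℕ} (j : ℕ) : 2*j - 1 ∈ arcAt ℓ J j := by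
  unfold arcAt
  split_ifs <;> simp

lemma arc_elim {ℓ : ℕ} {J : Finset ℕ} {j z : ℕ} (hz : z ∈ arcAt ℓ J j) :
    z = 2*j - 1 ∨ (j = minOf J ∧ ℓ+1 ∉ J ∧ z = 2 * maxOf J) ∨
      (j ≠ minOf J ∧ z = 2 * predIn J j) := by
  unfold arcAt at hz
  split_ifs at hz with h1 h2
  · simp only [Finset.mem_singleton] at hz
    exact Or.inl hz
  · simp only [Finset.mem_insert, Finset.mem_singleton] at hz
    rcases hz with h | h
    · exact Or.inl h
    · exact Or.inr (Or.inl ⟨h1, h2, h⟩)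
  · simp only [Finset.mem_insert, Finset.mem_singleton] at hz
    rcases hz with h | h
    · exact Or.inr (Or.inr ⟨h1, h⟩)
    · exact Or.inl h

lemma arc_own {ℓ : ℕ} {J : Finset ℕ} {j z : ℕ} (hJ : J ⊆ Finset.Icc 1 (ℓ+1))
    (hj : j ∈ J) (hz : z ∈ arcAt ℓ J j) : own z ∈ J := by
  have hj1 : 1 ≤ j := by have := hJ hj; rw [Finset.mem_Icc] at this; omega
  rcases arc_elim hz with h | ⟨h1, h2, h⟩ | ⟨h1, h⟩
  · rw [h, own_pred j hj1]; exact hj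
  · rw [h, own_two_mul]; exact maxOf_mem ⟨j, hj⟩
  · rw [h, own_two_mul]; exact (predIn_spec hj h1).1

lemma arc_subset {ℓ : ℕ} {J : Finset ℕ} {j : ℕ} (hJ : J ⊆ Finset.Icc 1 (ℓ+1))
    (hj : j ∈ J) : arcAt ℓ J j ⊆ Finset.Icc 1 (2*ℓ+1) := by
  intro z hz
  have hjb : 1 ≤ j ∧ j ≤ ℓ+1 := by have := hJ hj; rwa [Finset.mem_Icc] at this
  rw [Finset.mem_Icc]
  rcases arc_elim hz with h | ⟨h1, h2, h⟩ | ⟨h1, h⟩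
  · omega
  · have hm := maxOf_mem (⟨j, hj⟩ : J.Nonempty)
    have hmb := hJ hm
    rw [Finset.mem_Icc] at hmb
    have : maxOf J ≠ ℓ+1 := fun he => h2 (he ▸ hm)
    omega
  · obtain ⟨hp1, hp2, -⟩ := predIn_spec hj h1
    have hpb := hJ hp1
    rw [Finset.mem_Icc] at hpb
    omega

lemma arc_cover {ℓ : ℕ} {J : Finset ℕ} {z : ℕ} (hJ : J ⊆ Finset.Icc 1 (ℓ+1))
    (hzb : z ∈ Finset.Icc 1 (2*ℓ+1)) (ho : own z ∈ J) :
    ∃ j ∈ J, z ∈ arcAt ℓ J j := by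
  rw [Finset.mem_Icc] at hzb
  have hob := own_bound hzb.1 (rfl : own z = own z)
  have hcase : z = 2 * own z - 1 ∨ z = 2 * own z := by omega
  rcases hcase with h | h
  · refine ⟨own z, ho, ?_⟩
    have hmm := arc_mem_odd (ℓ := ℓ) (J := J) (own z)
    rwa [← h] at hmm
  · by_cases hum : own z = maxOf J
    · have hl : ℓ+1 ∉ J := by
        intro hlJ
        have h1 : ℓ+1 ≤ maxOf J := le_maxOf hlJ
        omega
      refine ⟨minOf J, minOf_mem ⟨_, ho⟩, ?_⟩
      rw [arcAt, if_pos rfl, if_neg hl]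
      simp only [Finset.mem_insert, Finset.mem_singleton]
      right; omega
    · obtain ⟨hs1, hs2, hs3⟩ := succIn_spec ho hum
      refine ⟨succIn J (own z), hs1, ?_⟩
      have hsne : succIn J (own z) ≠ minOf J := by
        have := minOf_le ho; omega
      rw [arcAt, if_neg hsne]
      simp only [Finset.mem_insert, Finset.mem_singleton]
      left
      rw [pred_succ ho hum]
      exact h

lemma arc_uniq {ℓ : ℕ} {J : Finset ℕ} {j j' z : ℕ} (hJ : J ⊆ Finset.Icc 1 (ℓ+1))
    (hj : j ∈ J) (hj' : j' ∈ J) (hz : z ∈ arcAt ℓ J j) (hz' : z ∈ arcAt ℓ J j') :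
    arcAt ℓ J j = arcAt ℓ J j' := by
  have hjb : 1 ≤ j := by have := hJ hj; rw [Finset.mem_Icc] at this; omega
  have hjb' : 1 ≤ j' := by have := hJ hj'; rw [Finset.mem_Icc] at this; omega
  rcases arc_elim hz with h | ⟨h1, h2, h⟩ | ⟨h1, h⟩ <;>
    rcases arc_elim hz' with h' | ⟨h1', h2', h'⟩ | ⟨h1', h'⟩
  · have : j = j' := by omega
    rw [this]
  · exfalso; omega
  · exfalso; omega
  · exfalso; omega
  · rw [h1, h1']
  · exfalso
    obtain ⟨hp1, hp2, -⟩ := predIn_spec hj' h1'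
    have hle := le_maxOf hj'
    have : maxOf J = predIn J j' := by omega
    omega
  · exfalso; omega
  · exfalso
    obtain ⟨hp1, hp2, -⟩ := predIn_spec hj h1
    have hle := le_maxOf hj
    have : maxOf J = predIn J j := by omega
    omega
  · have hpp : predIn J j = predIn J j' := by omega
    have : j = j' := by
      rw [← succ_pred hj h1, ← succ_pred hj' h1', hpp]
    rw [this]

section fwd

variable {ℓ : ℕ} {x : ℕ → ℕ} {P : Finset (Finset ℕ)}
  (hx : ∀ i ∈ Finset.Icc 1 ℓ, ∀ j ∈ Finset.Icc 1 ℓ, i < j → x j < x i)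
  (hxpos : ∀ i ∈ Finset.Icc 1 ℓ, 0 < x i)
  (hP : IsNCP (Blam ℓ x) P)

lemma mem_iblk {L : Finset ℕ} {i : ℕ} :
    i ∈ iblk ℓ x L ↔ i ∈ Finset.Icc 1 (ℓ+1) ∧ pos ℓ x i ∈ L := by
  simp [iblk]

include hx hxpos hP

lemma L_eq {L : Finset ℕ} (hL : L ∈ P) : L = (iblk ℓ x L).image (pos ℓ x) := by
  ext b
  constructor
  · intro hb
    have hbB := hP.1.2.1 L hL hb
    rw [Blam_eq_image] at hbB
    obtain ⟨i, hi, rfl⟩ := Finset.mem_image.1 hbB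
    exact Finset.mem_image.2 ⟨i, mem_iblk.2 ⟨hi, hb⟩, rfl⟩
  · intro hb
    obtain ⟨i, hi, rfl⟩ := Finset.mem_image.1 hb
    exact (mem_iblk.1 hi).2

lemma iblk_disj {L L' : Finset ℕ} (hL : L ∈ P) (hL' : L' ∈ P) (hne : L ≠ L')
    {i : ℕ} (h1 : i ∈ iblk ℓ x L) (h2 : i ∈ iblk ℓ x L') : False :=
  part_disj hP.1 hL hL' hne (mem_iblk.1 h1).2 (mem_iblk.1 h2).2

lemma qex {i : ℕ} (hi : i ∈ Finset.Icc 1 (ℓ+1)) : ∃ L ∈ P, i ∈ iblk ℓ x L := by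
  have hpB : pos ℓ x i ∈ Blam ℓ x := by
    rw [Blam_eq_image]; exact Finset.mem_image_of_mem _ hi
  obtain ⟨L, ⟨hL, hbL⟩, -⟩ := hP.1.2.2 (pos ℓ x i) hpB
  exact ⟨L, hL, mem_iblk.2 ⟨hi, hbL⟩⟩

lemma qnc {L L' : Finset ℕ} (hL : L ∈ P) (hL' : L' ∈ P) (hne : L ≠ L')
    {u1 u2 u3 u4 : ℕ} (h12 : u1 < u2) (h23 : u2 < u3) (h34 : u3 < u4)
    (hu1 : u1 ∈ iblk ℓ x L) (hu3 : u3 ∈ iblk ℓ x L)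
    (hu2 : u2 ∈ iblk ℓ x L') (hu4 : u4 ∈ iblk ℓ x L') : False := by
  have hI1 := (mem_iblk.1 hu1).1
  have hI2 := (mem_iblk.1 hu2).1
  have hI3 := (mem_iblk.1 hu3).1
  have hI4 := (mem_iblk.1 hu4).1
  exact use_noncross hP.2 hL' hL (Ne.symm hne) (mem_iblk.1 hu4).2 (mem_iblk.1 hu2).2
    (mem_iblk.1 hu3).2 (mem_iblk.1 hu1).2
    (pos_lt hx hxpos hI3 hI4 h34) (pos_lt hx hxpos hI2 hI3 h23)
    (pos_lt hx hxpos hI1 hI2 h12)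

lemma iblk_sub (L : Finset ℕ) : iblk ℓ x L ⊆ Finset.Icc 1 (ℓ+1) :=
  Finset.filter_subset _ _

lemma iblk_nonempty {L : Finset ℕ} (hL : L ∈ P) : (iblk ℓ x L).Nonempty := by
  obtain ⟨b, hb⟩ := hP.1.1 L hL
  have hbB := hP.1.2.1 L hL hb
  rw [Blam_eq_image] at hbB
  obtain ⟨i, hi, rfl⟩ := Finset.mem_image.1 hbB
  exact ⟨i, mem_iblk.2 ⟨hi, hb⟩⟩

lemma mem_sigOf {M : Finset ℕ} :
    M ∈ sigOf ℓ x P ↔ ∃ L ∈ P, ∃ j ∈ iblk ℓ x L, M = arcAt ℓ (iblk ℓ x L) j := by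
  simp only [sigOf, Finset.mem_biUnion, Finset.mem_image]
  constructor
  · rintro ⟨J, ⟨L, hL, rfl⟩, j, hj, rfl⟩
    exact ⟨L, hL, j, hj, rfl⟩
  · rintro ⟨L, hL, j, hj, rfl⟩
    exact ⟨iblk ℓ x L, ⟨L, hL, rfl⟩, j, hj, rfl⟩

lemma sig_partition : IsPartitionOf (Finset.Icc 1 (2*ℓ+1)) (sigOf ℓ x P) := by
  refine ⟨?_, ?_, ?_⟩
  · intro M hM
    obtain ⟨L, hL, j, hj, rfl⟩ := (mem_sigOf hx hxpos hP).1 hM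
    exact ⟨2*j - 1, arc_mem_odd j⟩
  · intro M hM
    obtain ⟨L, hL, j, hj, rfl⟩ := (mem_sigOf hx hxpos hP).1 hM
    exact arc_subset (iblk_sub hx hxpos hP L) hj
  · intro z hz
    have hzb : 1 ≤ z ∧ z ≤ 2*ℓ+1 := by rwa [Finset.mem_Icc] at hz
    have hoI : own z ∈ Finset.Icc 1 (ℓ+1) := by
      rw [Finset.mem_Icc]; unfold own; omega
    obtain ⟨L, hL, hoL⟩ := qex hx hxpos hP hoI
    obtain ⟨j, hj, hzarc⟩ := arc_cover (iblk_sub hx hxpos hP L) hz hoL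
    refine ⟨arcAt ℓ (iblk ℓ x L) j,
      ⟨(mem_sigOf hx hxpos hP).2 ⟨L, hL, j, hj, rfl⟩, hzarc⟩, ?_⟩
    rintro M' ⟨hM', hzM'⟩
    obtain ⟨L', hL', j', hj', rfl⟩ := (mem_sigOf hx hxpos hP).1 hM'
    have ho' : own z ∈ iblk ℓ x L' := arc_own (iblk_sub hx hxpos hP L') hj' hzM'
    have hLL : L' = L := by
      by_contra hne
      exact iblk_disj hx hxpos hP hL' hL hne ho' hoL
    subst hLL
    exact arc_uniq (iblk_sub hx hxpos hP L') hj' hj hzM' hzarc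

/-- the two-element shape of a non-singleton arc -/
lemma arc_pair_shape {J : Finset ℕ} {j a b : ℕ} (hJ : J ⊆ Finset.Icc 1 (ℓ+1))
    (hj : j ∈ J) (ha : a ∈ arcAt ℓ J j) (hb : b ∈ arcAt ℓ J j) (hab : a < b) :
    (j ≠ minOf J ∧ a = 2 * predIn J j ∧ b = 2*j - 1) ∨
    (j = minOf J ∧ ℓ+1 ∉ J ∧ a = 2 * minOf J - 1 ∧ b = 2 * maxOf J) := by
  have hjb : 1 ≤ j := by have := hJ hj; rw [Finset.mem_Icc] at this; omega
  have hminle : minOf J ≤ j := minOf_le hj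
  have hminb : 1 ≤ minOf J := by
    have := hJ (minOf_mem ⟨j, hj⟩); rw [Finset.mem_Icc] at this; omega
  have hmaxge : j ≤ maxOf J := le_maxOf hj
  rcases arc_elim ha with h | ⟨h1, h2, h⟩ | ⟨h1, h⟩ <;>
    rcases arc_elim hb with h' | ⟨h1', h2', h'⟩ | ⟨h1', h'⟩
  · exfalso; omega
  · right
    refine ⟨h1', h2', ?_, h'⟩
    rw [← h1'] at *; omega
  · exfalso
    obtain ⟨hp1, hp2, -⟩ := predIn_spec hj h1'
    omega
  · exfalso; omega
  · exfalso; omega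
  · exfalso; omega
  · left
    exact ⟨h1, h, by omega⟩
  · exfalso; omega
  · exfalso; omega

lemma L0_exists : ∃ L0 ∈ P, (0:ℕ) ∈ L0 ∧ ∀ L ∈ P, (0:ℕ) ∈ L → L = L0 := by
  have h0B : (0:ℕ) ∈ Blam ℓ x := Finset.mem_insert_self _ _
  obtain ⟨L0, ⟨hL0, h00⟩, huniq⟩ := hP.1.2.2 0 h0B
  exact ⟨L0, hL0, h00, fun L hL h0L => huniq L ⟨hL, h0L⟩⟩

lemma lp1_mem_iblk {L : Finset ℕ} : (ℓ+1) ∈ iblk ℓ x L ↔ (0:ℕ) ∈ L := by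
  rw [mem_iblk, pos, if_pos rfl]
  simp only [Finset.mem_Icc]
  constructor
  · exact fun h => h.2
  · exact fun h => ⟨⟨by omega, le_refl _⟩, h⟩

end fwd


section fwd2

variable {ℓ : ℕ} {x : ℕ → ℕ} {P : Finset (Finset ℕ)}
  (hx : ∀ i ∈ Finset.Icc 1 ℓ, ∀ j ∈ Finset.Icc 1 ℓ, i < j → x j < x i)
  (hxpos : ∀ i ∈ Finset.Icc 1 ℓ, 0 < x i)
  (hP : IsNCP (Blam ℓ x) P)

include hx hxpos hP

lemma sig_noncrossing : PairwiseNoncrossing (sigOf ℓ x P) := by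
  apply mk_noncross (sig_partition hx hxpos hP)
  intro M hM M' hM' hne a ha b hb c hc d hd hcross
  obtain ⟨hac, hcb, hbd⟩ := hcross
  obtain ⟨L, hL, j, hj, rfl⟩ := (mem_sigOf hx hxpos hP).1 hM
  obtain ⟨L', hL', j', hj', rfl⟩ := (mem_sigOf hx hxpos hP).1 hM'
  have hJsub := iblk_sub hx hxpos hP L
  have hJsub' := iblk_sub hx hxpos hP L'
  by_cases hLL : L = L'
  · subst hLL
    have hjb : 1 ≤ j ∧ j ≤ ℓ+1 := by
      have := hJsub hj; rwa [Finset.mem_Icc] at this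
    have hjb' : 1 ≤ j' ∧ j' ≤ ℓ+1 := by
      have := hJsub hj'; rwa [Finset.mem_Icc] at this
    rcases arc_pair_shape hx hxpos hP hJsub hj ha hb (by omega)
      with ⟨hne1, ha1, hb1⟩ | ⟨he1, hl1, ha1, hb1⟩ <;>
      rcases arc_pair_shape hx hxpos hP hJsub hj' hc hd (by omega)
        with ⟨hne1', hc1, hd1⟩ | ⟨he1', hl1', hc1, hd1⟩
    · obtain ⟨hp1, hp2, hp3⟩ := predIn_spec hj' hne1'
      have hjle : j ≤ predIn (iblk ℓ x L) j' := hp3 j hj (by omega)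
      omega
    · have := minOf_le (predIn_spec hj hne1).1
      omega
    · have := le_maxOf hj'
      omega
    · exact hne (by rw [he1, he1'])
  · have hoa : own a ∈ iblk ℓ x L := arc_own hJsub hj ha
    have hob : own b ∈ iblk ℓ x L := arc_own hJsub hj hb
    have hoc : own c ∈ iblk ℓ x L' := arc_own hJsub' hj' hc
    have hod : own d ∈ iblk ℓ x L' := arc_own hJsub' hj' hd
    have h1 : own a < own c := by
      have hle : own a ≤ own c := by unfold own; omega
      rcases eq_or_lt_of_le hle with he | hl
      · exact absurd (he ▸ hoa) (fun hmem => iblk_disj hx hxpos hP hL hL' hLL hmem hoc)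
      · exact hl
    have h2 : own c < own b := by
      have hle : own c ≤ own b := by unfold own; omega
      rcases eq_or_lt_of_le hle with he | hl
      · exact absurd (he ▸ hoc) (fun hmem => iblk_disj hx hxpos hP hL' hL
          (Ne.symm hLL) hmem hob)
      · exact hl
    have h3 : own b < own d := by
      have hle : own b ≤ own d := by unfold own; omega
      rcases eq_or_lt_of_le hle with he | hl
      · exact absurd (he ▸ hob) (fun hmem => iblk_disj hx hxpos hP hL hL' hLL hmem hod)
      · exact hl
    exact qnc hx hxpos hP hL hL' hLL h1 h2 h3 hoa hob hoc hod

lemma sig_TL : IsTLPattern (Finset.Icc 1 (2*ℓ+1)) (sigOf ℓ x P) := by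
  obtain ⟨L0, hL0, h00, hL0u⟩ := L0_exists hx hxpos hP
  have hl10 : (ℓ+1) ∈ iblk ℓ x L0 := (lp1_mem_iblk hx hxpos hP).2 h00
  set J0 := iblk ℓ x L0 with hJ0
  have hJ0ne : J0.Nonempty := ⟨_, hl10⟩
  have hJ0sub := iblk_sub hx hxpos hP L0
  have hm0 : minOf J0 ∈ J0 := minOf_mem hJ0ne
  have hm0b : 1 ≤ minOf J0 ∧ minOf J0 ≤ ℓ+1 := by
    have := hJ0sub hm0; rwa [Finset.mem_Icc] at this
  refine ⟨sig_partition hx hxpos hP, sig_noncrossing hx hxpos hP,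
    arcAt ℓ J0 (minOf J0), (mem_sigOf hx hxpos hP).2 ⟨L0, hL0, minOf J0, hm0, rfl⟩,
    2 * minOf J0 - 1, ⟨minOf J0 - 1, by omega⟩, ?_, ?_⟩
  · rw [arcAt, if_pos rfl, if_pos hl10]
  · intro M hM hneM0
    obtain ⟨L, hL, j, hj, rfl⟩ := (mem_sigOf hx hxpos hP).1 hM
    have hJsub := iblk_sub hx hxpos hP L
    have hjb : 1 ≤ j ∧ j ≤ ℓ+1 := by
      have := hJsub hj; rwa [Finset.mem_Icc] at this
    by_cases hjm : j = minOf (iblk ℓ x L)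
    · by_cases hlJ : (ℓ+1) ∈ iblk ℓ x L
      · exfalso
        have hLL0 : L = L0 := hL0u L hL ((lp1_mem_iblk hx hxpos hP).1 hlJ)
        subst hLL0
        exact hneM0 (by rw [hjm])
      · -- closing pair
        have hmax : maxOf (iblk ℓ x L) ∈ iblk ℓ x L := maxOf_mem ⟨j, hj⟩
        have hmaxb : 1 ≤ maxOf (iblk ℓ x L) ∧ maxOf (iblk ℓ x L) ≤ ℓ+1 := by
          have := hJsub hmax; rwa [Finset.mem_Icc] at this
        have hmaxlt : maxOf (iblk ℓ x L) < ℓ+1 := by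
          rcases eq_or_lt_of_le hmaxb.2 with he | hlt
          · exact absurd (he ▸ hmax) hlJ
          · exact hlt
        have hminle : minOf (iblk ℓ x L) ≤ maxOf (iblk ℓ x L) := minOf_le hmax
        have hLne0 : L ≠ L0 := by
          intro hcon
          exact hlJ (hcon ▸ hl10)
        refine ⟨2 * minOf (iblk ℓ x L) - 1, 2 * maxOf (iblk ℓ x L),
          by omega, by rw [arcAt, if_pos hjm, if_neg hlJ, hjm], ?_⟩
        by_contra hcon
        push_neg at hcon
        obtain ⟨hc1, hc2⟩ := hcon
        -- minOf J < minOf J0 < maxOf J < ℓ+1  (after eliminating equalities)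
        have hne1 : minOf J0 ≠ minOf (iblk ℓ x L) := by
          intro he
          exact iblk_disj hx hxpos hP hL0 hL hLne0.symm (he ▸ hm0) (minOf_mem ⟨j, hj⟩)
        have hne2 : minOf J0 ≠ maxOf (iblk ℓ x L) := by
          intro he
          exact iblk_disj hx hxpos hP hL0 hL hLne0.symm (he ▸ hm0) hmax
        exact qnc hx hxpos hP hL hL0 hLne0
          (show minOf (iblk ℓ x L) < minOf J0 by omega)
          (show minOf J0 < maxOf (iblk ℓ x L) by omega) hmaxlt
          (minOf_mem ⟨j, hj⟩) hmax hm0 hl10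
    · -- consecutive pair
      obtain ⟨hp1, hp2, hp3⟩ := predIn_spec hj hjm
      have hpb : 1 ≤ predIn (iblk ℓ x L) j := by
        have := hJsub hp1; rw [Finset.mem_Icc] at this; omega
      refine ⟨2 * predIn (iblk ℓ x L) j, 2*j - 1, by omega,
        by rw [arcAt, if_neg hjm], ?_⟩
      by_contra hcon
      push_neg at hcon
      obtain ⟨hc1, hc2⟩ := hcon
      by_cases hLL0 : L = L0
      · subst hLL0
        rw [hJ0] at hc1 hc2
        have := minOf_le hp1
        omega
      · have hne1 : minOf J0 ≠ predIn (iblk ℓ x L) j := by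
          intro he
          exact iblk_disj hx hxpos hP hL0 hL (fun h => hLL0 h.symm) (he ▸ hm0) hp1
        have hne2 : minOf J0 ≠ j := by
          intro he
          exact iblk_disj hx hxpos hP hL0 hL (fun h => hLL0 h.symm) (he ▸ hm0) hj
        have hjlt : j < ℓ+1 := by
          rcases eq_or_lt_of_le hjb.2 with he | hlt
          · exfalso
            exact hLL0 (hL0u L hL ((lp1_mem_iblk hx hxpos hP).1 (he ▸ hj)))
          · exact hlt
        exact qnc hx hxpos hP hL hL0 hLL0
          (show predIn (iblk ℓ x L) j < minOf J0 by omega)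
          (show minOf J0 < j by omega) hjlt hp1 hj hm0 hl10

lemma rel0_sub {u v : ℕ} (h : rel0 (sigOf ℓ x P) u v) :
    ∃ L ∈ P, u ∈ iblk ℓ x L ∧ v ∈ iblk ℓ x L := by
  obtain ⟨M, hM, ⟨p, hp, hop⟩, ⟨q, hq, hoq⟩⟩ := h
  obtain ⟨L, hL, j, hj, rfl⟩ := (mem_sigOf hx hxpos hP).1 hM
  have hJsub := iblk_sub hx hxpos hP L
  exact ⟨L, hL, hop ▸ arc_own hJsub hj hp, hoq ▸ arc_own hJsub hj hq⟩

lemma chain {L : Finset ℕ} (hL : L ∈ P) :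
    ∀ n u, u ∈ iblk ℓ x L → maxOf (iblk ℓ x L) - u ≤ n →
    Relation.ReflTransGen (rel0 (sigOf ℓ x P)) u (maxOf (iblk ℓ x L)) := by
  intro n
  induction n with
  | zero =>
    intro u hu hn
    have := le_maxOf hu
    have : u = maxOf (iblk ℓ x L) := by omega
    rw [this]
  | succ N ih =>
    intro u hu hn
    by_cases hum : u = maxOf (iblk ℓ x L)
    · rw [hum]
    · obtain ⟨hs1, hs2, hs3⟩ := succIn_spec hu hum
      have hub : 1 ≤ u := by
        have := iblk_sub hx hxpos hP L hu; rw [Finset.mem_Icc] at this; omega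
      have hsb : 1 ≤ succIn (iblk ℓ x L) u := by omega
      have hsne : succIn (iblk ℓ x L) u ≠ minOf (iblk ℓ x L) := by
        have := minOf_le hu; omega
      have hrel : rel0 (sigOf ℓ x P) u (succIn (iblk ℓ x L) u) := by
        refine ⟨arcAt ℓ (iblk ℓ x L) (succIn (iblk ℓ x L) u),
          (mem_sigOf hx hxpos hP).2 ⟨L, hL, _, hs1, rfl⟩, ⟨2*u, ?_, own_two_mul u⟩,
          ⟨2 * succIn (iblk ℓ x L) u - 1, arc_mem_odd _, own_pred _ hsb⟩⟩
        rw [arcAt, if_neg hsne]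
        simp only [Finset.mem_insert, Finset.mem_singleton]
        left
        rw [pred_succ hu hum]
      have hle := le_maxOf hs1
      exact Relation.ReflTransGen.head hrel (ih _ hs1 (by omega))
  
lemma rtg_iblk {L : Finset ℕ} (hL : L ∈ P) {u j : ℕ} (hu : u ∈ iblk ℓ x L)
    (h : Relation.ReflTransGen (rel0 (sigOf ℓ x P)) u j) : j ∈ iblk ℓ x L := by
  induction h with
  | refl => exact hu
  | tail hab hbc ih =>
    obtain ⟨L'', hL'', hw, hj⟩ := rel0_sub hx hxpos hP hbc
    have : L = L'' := by
      by_contra hne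
      exact iblk_disj hx hxpos hP hL hL'' hne ih hw
    rw [this]
    exact hj

lemma cls_eq_iblk {L : Finset ℕ} (hL : L ∈ P) {u : ℕ} (hu : u ∈ iblk ℓ x L) :
    cls ℓ (sigOf ℓ x P) u = iblk ℓ x L := by
  ext j
  rw [mem_cls]
  constructor
  · rintro ⟨hjI, hrtg⟩
    exact rtg_iblk hx hxpos hP hL hu hrtg
  · intro hj
    refine ⟨iblk_sub hx hxpos hP L hj, ?_⟩
    have h1 := chain hx hxpos hP hL (maxOf (iblk ℓ x L) - u) u hu le_rfl
    have h2 := chain hx hxpos hP hL (maxOf (iblk ℓ x L) - j) j hj le_rfl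
    exact Relation.ReflTransGen.trans h1 (rtg_symm (rel0_symm _) h2)

lemma Pof_sigOf : Pof ℓ x (sigOf ℓ x P) = P := by
  ext L'
  constructor
  · intro hL'
    simp only [Pof, Finset.mem_image] at hL'
    obtain ⟨i, hi, rfl⟩ := hL'
    obtain ⟨L, hL, hiL⟩ := qex hx hxpos hP hi
    rw [cls_eq_iblk hx hxpos hP hL hiL, ← L_eq hx hxpos hP hL]
    exact hL
  · intro hL'
    obtain ⟨i, hi⟩ := iblk_nonempty hx hxpos hP hL'
    simp only [Pof, Finset.mem_image]
    refine ⟨i, iblk_sub hx hxpos hP L' hi, ?_⟩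
    rw [cls_eq_iblk hx hxpos hP hL' hi, ← L_eq hx hxpos hP hL']

end fwd2

end LS

/-- If all multiplicities `r_i` are even, every NCP of `B_λ` is an even NCP, and the
set of subgroups `A_𝓛` (`𝓛` an NCP of `B_λ`) equals the set of Lusztig subgroups `H_σ`
(`σ` a TL pattern of `{1, …, 2ℓ+1}`); this proves the Lusztig–Sommers conjecture. -/
theorem stmt5 (ℓ : ℕ) (x r : ℕ → ℕ)
    (hx : ∀ i ∈ Finset.Icc 1 ℓ, ∀ j ∈ Finset.Icc 1 ℓ, i < j → x j < x i)
    (hxpos : ∀ i ∈ Finset.Icc 1 ℓ, 0 < x i)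
    (hr : ∀ i ∈ Finset.Icc 1 ℓ, 0 < r i)
    (hreven : ∀ i ∈ Finset.Icc 1 ℓ, Even (r i)) :
    (∀ P, IsNCP (Blam ℓ x) P → IsEvenNCP ℓ x r P) ∧
    {S : AddSubgroup (Fin ℓ → ZMod 2) |
        ∃ P, IsNCP (Blam ℓ x) P ∧ S = ncpSubgroup ℓ x P} =
    {S | ∃ σ, IsTLPattern (Finset.Icc 1 (2 * ℓ + 1)) σ ∧
        S = AddSubgroup.closure (tlGens ℓ (Finset.Icc 1 ℓ) σ)} := by
  constructor
  · intro P hPncp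
    refine ⟨hPncp, ?_⟩
    intro L hL h0
    have hdvd : 2 ∣ ∑ j ∈ (Finset.Icc 1 ℓ).filter (fun j => 2 * x j ∈ L), r j := by
      apply Finset.dvd_sum
      intro j hj
      obtain ⟨k, hk⟩ := hreven j (Finset.mem_filter.1 hj).1
      exact ⟨k, by omega⟩
    obtain ⟨c, hc⟩ := hdvd
    exact ⟨c, by omega⟩
  · ext S
    simp only [Set.mem_setOf_eq]
    constructor
    · rintro ⟨P, hPncp, rfl⟩
      refine ⟨LS.sigOf ℓ x P, LS.sig_TL hx hxpos hPncp, ?_⟩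
      have h1 := LS.Pof_subgroup (LS.sig_TL hx hxpos hPncp) hx hxpos
      rw [← h1, LS.Pof_sigOf hx hxpos hPncp]
    · rintro ⟨σ, hσ, rfl⟩
      exact ⟨LS.Pof ℓ x σ, LS.Pof_isNCP hσ hx hxpos, (LS.Pof_subgroup hσ hx hxpos).symm⟩
end

section
/- Let ℓ ≥ 1. There is a bijection Φ from the set of Temperley–Lieb patterns of {1, 2, …, 2ℓ+1} to the set of noncrossing partitions of {0, 1, …, ℓ} with the following property: if σ is a TL pattern whose blocks consisting of an odd element smaller than an even element are {2a_1+1, 2b_1}, …, {2a_d+1, 2b_d}, then the blocks of Φ(σ) not containing 0 are exactly the d sets [a_j+1, b_j] ∖ ⋃_{j' : [a_{j'}+1, b_{j'}] ⊊ [a_j+1, b_j]} [a_{j'}+1, b_{j'}] for 1 ≤ j ≤ d (intervals of integers), and the block of Φ(σ) containing 0 is the complement in {0, 1, …, ℓ} of the union of these d sets. -/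
/-- The pairs `(a, b)` such that `{2a+1, 2b}` is a block of `σ` whose odd element
`2a+1` is smaller than its even element `2b`. -/
def oddEvenPairs (ℓ : ℕ) (σ : Finset (Finset ℕ)) : Finset (ℕ × ℕ) :=
  ((Finset.Icc 0 ℓ) ×ˢ (Finset.Icc 0 ℓ)).filter
    (fun q => ({2 * q.1 + 1, 2 * q.2} : Finset ℕ) ∈ σ ∧ 2 * q.1 + 1 < 2 * q.2)

/-- `carve ℓ σ (a, b) = [a+1, b] ∖ ⋃ {[a'+1, b'] : [a'+1, b'] ⊊ [a+1, b]}`, the union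
over the pairs `(a', b')` of `σ` with odd element smaller than even element. -/
def carve (ℓ : ℕ) (σ : Finset (Finset ℕ)) (q : ℕ × ℕ) : Finset ℕ :=
  Finset.Icc (q.1 + 1) q.2 \
    (((oddEvenPairs ℓ σ).filter
        (fun q' => Finset.Icc (q'.1 + 1) q'.2 ⊂ Finset.Icc (q.1 + 1) q.2)).biUnion
      (fun q' => Finset.Icc (q'.1 + 1) q'.2))

/-!
The map `Φ = carvePartition ℓ` keeps, for a TL pattern `σ`, the carved intervals of its odd–even
arcs `{2a+1, 2b}` and puts everything else into the block of `0`. Since `σ` is noncrossing, the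
intervals `[a+1, b]` are pairwise disjoint or strictly nested; this makes the carved intervals
disjoint, nonempty and noncrossing, so `Φ σ` is an NCP, and each carved interval determines its arc
through its least and greatest elements.

`Φ` is injective because a TL pattern is determined by its odd–even arcs. The inside of an arc is
a union of arcs, so every arc joins points of different parity, and the arcs that are not odd–even
run from an even point to an odd one. By induction on its length, such an arc is forced once the
arcs inside it are known.

Instead of inverting `Φ`, we count. An NCP `P` of `{0, …, ℓ}` gives a noncrossing perfect matching
of `{0, …, 2ℓ+1}` joining `2i+1` to `2j` whenever `j` follows `i` cyclically in its block.
Deleting `0` turns it into a TL pattern whose singleton is the former partner of `0`, and `P` can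
be read off from it. Two injections between finite sets make `Φ` a bijection.
-/

open Finset

theorem Set.BijOn.of_injOn_of_injOn {α β : Type*} {s : Set α} {t : Set β} {f : α → β}
    {g : β → α} (hs : s.Finite) (ht : t.Finite) (hf : Set.MapsTo f s t) (hf' : Set.InjOn f s)
    (hg : Set.MapsTo g t s) (hg' : Set.InjOn g t) : Set.BijOn f s t := by
  have hst : s.ncard ≤ t.ncard := Set.ncard_le_ncard_of_injOn f hf hf' ht
  have hts : t.ncard ≤ s.ncard := Set.ncard_le_ncard_of_injOn g hg hg' hs
  refine ⟨hf, hf', ?_⟩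
  rw [Set.SurjOn, Set.eq_of_subset_of_ncard_le hf.image_subset
    (by rw [hf'.ncard_image]; omega) ht]

theorem Finset.Icc_ssubset_Icc_iff {a b c d : ℕ} (hab : a ≤ b) :
    Icc a b ⊂ Icc c d ↔ c ≤ a ∧ b ≤ d ∧ (a, b) ≠ (c, d) := by
  rw [ssubset_iff_subset_ne, Icc_subset_Icc_iff hab]
  constructor
  · rintro ⟨h, hne⟩
    exact ⟨h.1, h.2, fun e ↦ hne (by simp_all)⟩
  · rintro ⟨h1, h2, hne⟩
    refine ⟨⟨h1, h2⟩, fun e ↦ hne ?_⟩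
    have ha : c ∈ Icc a b := e ▸ left_mem_Icc.2 (by omega)
    have hb : d ∈ Icc a b := e ▸ right_mem_Icc.2 (by omega)
    simp only [mem_Icc] at ha hb
    simp only [Prod.mk.injEq]
    omega

theorem eq_and_eq_of_pair_eq_pair {a b c d : ℕ} (hab : a < b) (hcd : c < d)
    (h : ({a, b} : Finset ℕ) = {c, d}) : a = c ∧ b = d := by
  have ha : a ∈ ({c, d} : Finset ℕ) := h ▸ by simp
  have hb : b ∈ ({c, d} : Finset ℕ) := h ▸ by simp
  have hc : c ∈ ({a, b} : Finset ℕ) := h ▸ by simp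
  simp only [mem_insert, mem_singleton] at ha hb hc
  omega

/-! ### Partitions and noncrossing partitions -/

theorem finite_setOf_isPartitionOf (B : Finset ℕ) : {P | IsPartitionOf B P}.Finite :=
  (B.powerset.powerset : Set (Finset (Finset ℕ))).toFinite.subset fun _ hP ↦
    mem_coe.2 (mem_powerset.2 fun L hL ↦ mem_powerset.2 (hP.2.1 L hL))

theorem isPartitionOf_of_disjoint {B : Finset ℕ} {P : Finset (Finset ℕ)}
    (hne : ∀ L ∈ P, L.Nonempty) (hsub : ∀ L ∈ P, L ⊆ B) (hcover : ∀ x ∈ B, ∃ L ∈ P, x ∈ L)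
    (hdisj : ∀ L ∈ P, ∀ L' ∈ P, L ≠ L' → Disjoint L L') : IsPartitionOf B P := by
  refine ⟨hne, hsub, fun x hx ↦ ?_⟩
  obtain ⟨L, hL, hxL⟩ := hcover x hx
  refine ⟨L, ⟨hL, hxL⟩, fun L' ⟨hL', hxL'⟩ ↦ ?_⟩
  by_contra hLL
  exact disjoint_left.1 (hdisj L' hL' L hL hLL) hxL' hxL

namespace IsPartitionOf

variable {B : Finset ℕ} {P : Finset (Finset ℕ)}

theorem exists_mem (hP : IsPartitionOf B P) {x : ℕ} (hx : x ∈ B) : ∃ L ∈ P, x ∈ L :=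
  (hP.2.2 x hx).exists

theorem eq_of_mem_of_mem (hP : IsPartitionOf B P) {L L' : Finset ℕ} (hL : L ∈ P) (hL' : L' ∈ P)
    {x : ℕ} (hx : x ∈ L) (hx' : x ∈ L') : L = L' :=
  (hP.2.2 x (hP.2.1 L hL hx)).unique ⟨hL, hx⟩ ⟨hL', hx'⟩

theorem ne_of_mem (hP : IsPartitionOf B P) {L L' : Finset ℕ} (hL : L ∈ P) (hL' : L' ∈ P)
    (hne : L ≠ L') {x y : ℕ} (hx : x ∈ L) (hy : y ∈ L') : x ≠ y := by
  rintro rfl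
  exact hne (hP.eq_of_mem_of_mem hL hL' hx hy)

theorem eq_of_pair_mem_of_mem (hP : IsPartitionOf B P) {a b c d x : ℕ} (hab : a < b)
    (hcd : c < d) (h : {a, b} ∈ P) (h' : {c, d} ∈ P) (hx : x ∈ ({a, b} : Finset ℕ))
    (hx' : x ∈ ({c, d} : Finset ℕ)) : a = c ∧ b = d :=
  eq_and_eq_of_pair_eq_pair hab hcd (hP.eq_of_mem_of_mem h h' hx hx')

theorem card_eq_sum_card_of_saturated (hP : IsPartitionOf B P) {S : Finset ℕ} (hSB : S ⊆ B)
    (hS : ∀ L ∈ P, ∀ x ∈ L, x ∈ S → L ⊆ S) :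
    #S = ∑ L ∈ P.filter (· ⊆ S), #L := by
  rw [← card_biUnion]
  · congr 1
    ext x
    simp only [mem_biUnion, mem_filter]
    refine ⟨fun hx ↦ ?_, fun ⟨L, ⟨_, hLS⟩, hx⟩ ↦ hLS hx⟩
    obtain ⟨L, hL, hxL⟩ := hP.exists_mem (hSB hx)
    exact ⟨L, ⟨hL, hS L hL x hxL hx⟩, hxL⟩
  · intro L hL L' hL' hne
    exact disjoint_left.2 fun x hx hx' ↦
      hne (hP.eq_of_mem_of_mem (mem_filter.1 hL).1 (mem_filter.1 hL').1 hx hx')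

theorem eq_of_forall_exists_superset {P' : Finset (Finset ℕ)} (hP : IsPartitionOf B P)
    (hP' : IsPartitionOf B P') (h : ∀ L ∈ P, ∃ L' ∈ P', L ⊆ L')
    (h' : ∀ L' ∈ P', ∃ L ∈ P, L' ⊆ L) : P = P' := by
  suffices key : ∀ {Q Q' : Finset (Finset ℕ)}, IsPartitionOf B Q →
      (∀ L ∈ Q, ∃ L' ∈ Q', L ⊆ L') → (∀ L' ∈ Q', ∃ L ∈ Q, L' ⊆ L) → Q ⊆ Q' from
    (key hP h h').antisymm (key hP' h' h)
  intro Q Q' hQ h h' L hL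
  obtain ⟨L', hL', hLL'⟩ := h L hL
  obtain ⟨L'', hL'', hL'L''⟩ := h' L' hL'
  obtain ⟨x, hx⟩ := hQ.1 L hL
  have : L = L'' := hQ.eq_of_mem_of_mem hL hL'' hx (hL'L'' (hLL' hx))
  rwa [hLL'.antisymm (this ▸ hL'L'')]

end IsPartitionOf

theorem Icc_trichotomy_of_not_crossing {a b c d : ℕ} (hab : a ≤ b) (hcd : c ≤ d)
    (h₁ : ¬(a < c ∧ c ≤ b ∧ b < d)) (h₂ : ¬(c < a ∧ a ≤ d ∧ d < b)) :
    Icc a b ∩ Icc c d = ∅ ∨ Icc a b ⊆ Icc c d ∨ Icc c d ⊆ Icc a b := by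
  by_cases hdis : b < c ∨ d < a
  · left
    ext x
    simp only [mem_inter, mem_Icc, notMem_empty, iff_false]
    omega
  · right
    rw [Icc_subset_Icc_iff hab, Icc_subset_Icc_iff hcd]
    omega

theorem PairwiseNoncrossing.not_crossing {P : Finset (Finset ℕ)} (hP : PairwiseNoncrossing P)
    {L L' : Finset ℕ} (hL : L ∈ P) (hL' : L' ∈ P) (hne : L ≠ L') {a b c d : ℕ} (ha : a ∈ L)
    (hb : b ∈ L) (hc : c ∈ L') (hd : d ∈ L') (hac : a < c) (hcb : c < b) (hbd : b < d) :
    False := by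
  rcases hP L hL L' hL' hne a ha b hb c hc d hd (by omega) (by omega) with h | h | h
  · have : c ∈ Icc a b ∩ Icc c d := by simp only [mem_inter, mem_Icc]; omega
    simp [h] at this
  · rw [Icc_subset_Icc_iff (by omega)] at h; omega
  · rw [Icc_subset_Icc_iff (by omega)] at h; omega

theorem pairwiseNoncrossing_of_not_crossing {P : Finset (Finset ℕ)}
    (hdisj : ∀ L ∈ P, ∀ L' ∈ P, L ≠ L' → Disjoint L L')
    (h : ∀ L ∈ P, ∀ L' ∈ P, L ≠ L' → ∀ a ∈ L, ∀ b ∈ L, ∀ c ∈ L', ∀ d ∈ L',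
      a < c → c < b → b < d → False) :
    PairwiseNoncrossing P := by
  intro L hL L' hL' hne a ha b hb c hc d hd hab hcd
  have hbc : b ≠ c := fun e ↦ disjoint_left.1 (hdisj L hL L' hL' hne) hb (e ▸ hc)
  have hda : d ≠ a := fun e ↦ disjoint_left.1 (hdisj L hL L' hL' hne) ha (e ▸ hd)
  refine Icc_trichotomy_of_not_crossing hab hcd (fun h' ↦ ?_) (fun h' ↦ ?_)
  · exact h L hL L' hL' hne a ha b hb c hc d hd h'.1 (by omega) h'.2.2
  · exact h L' hL' L hL hne.symm c hc d hd a ha b hb h'.1 (by omega) h'.2.2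

/-! ### Carved intervals -/

section Carve

variable {Z : Finset ℕ} {ℓ : ℕ} {σ : Finset (Finset ℕ)} {q : ℕ × ℕ} {x : ℕ}

theorem mem_oddEvenPairs :
    q ∈ oddEvenPairs ℓ σ ↔ {2 * q.1 + 1, 2 * q.2} ∈ σ ∧ q.1 < q.2 ∧ q.2 ≤ ℓ := by
  simp only [oddEvenPairs, mem_filter, mem_product, mem_Icc]
  constructor
  · rintro ⟨⟨-, -, h⟩, hσ, hlt⟩
    exact ⟨hσ, by omega, h⟩
  · rintro ⟨hσ, hlt, h⟩
    exact ⟨⟨⟨Nat.zero_le _, by omega⟩, Nat.zero_le _, h⟩, hσ, by omega⟩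

theorem oddEvenPairs_disjoint_or_nested (hσ : IsNCP Z σ) {q' : ℕ × ℕ}
    (hq : q ∈ oddEvenPairs ℓ σ) (hq' : q' ∈ oddEvenPairs ℓ σ) (hne : q ≠ q') :
    q.2 ≤ q'.1 ∨ q'.2 ≤ q.1 ∨ (q.1 < q'.1 ∧ q'.2 < q.2) ∨ (q'.1 < q.1 ∧ q.2 < q'.2) := by
  rw [mem_oddEvenPairs] at hq hq'
  have hB : ({2 * q.1 + 1, 2 * q.2} : Finset ℕ) ≠ {2 * q'.1 + 1, 2 * q'.2} := by
    intro h
    have h1 : 2 * q.1 + 1 ∈ ({2 * q'.1 + 1, 2 * q'.2} : Finset ℕ) := h ▸ by simp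
    have h2 : 2 * q.2 ∈ ({2 * q'.1 + 1, 2 * q'.2} : Finset ℕ) := h ▸ by simp
    simp only [mem_insert, mem_singleton] at h1 h2
    exact hne (Prod.ext (by omega) (by omega))
  have h1 : q.1 ≠ q'.1 := fun e ↦ hB (hσ.1.eq_of_mem_of_mem hq.1 hq'.1
    (mem_insert_self _ _) (by rw [e]; exact mem_insert_self _ _))
  have h2 : q.2 ≠ q'.2 := fun e ↦ hB (hσ.1.eq_of_mem_of_mem hq.1 hq'.1
    (by simp) (by simp [e] : 2 * q.2 ∈ ({2 * q'.1 + 1, 2 * q'.2} : Finset ℕ)))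
  have c1 : ¬(2 * q.1 + 1 < 2 * q'.1 + 1 ∧ 2 * q'.1 + 1 < 2 * q.2 ∧ 2 * q.2 < 2 * q'.2) :=
    fun hc ↦ hσ.2.not_crossing hq.1 hq'.1 hB (by simp) (by simp) (by simp) (by simp)
      hc.1 hc.2.1 hc.2.2
  have c2 : ¬(2 * q'.1 + 1 < 2 * q.1 + 1 ∧ 2 * q.1 + 1 < 2 * q'.2 ∧ 2 * q'.2 < 2 * q.2) :=
    fun hc ↦ hσ.2.not_crossing hq'.1 hq.1 hB.symm (by simp) (by simp) (by simp) (by simp)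
      hc.1 hc.2.1 hc.2.2
  omega

theorem mem_carve_iff :
    x ∈ carve ℓ σ q ↔ q.1 < x ∧ x ≤ q.2 ∧ ∀ q' ∈ oddEvenPairs ℓ σ,
      q.1 ≤ q'.1 → q'.2 ≤ q.2 → q' ≠ q → ¬(q'.1 < x ∧ x ≤ q'.2) := by
  simp only [carve, mem_sdiff, mem_biUnion, mem_filter, mem_Icc, not_exists, not_and,
    and_assoc, Nat.add_one_le_iff]
  refine and_congr Iff.rfl (and_congr Iff.rfl (forall₂_congr fun q' hq' ↦ ?_))
  rw [Icc_ssubset_Icc_iff (mem_oddEvenPairs.1 hq').2.1, Ne, Prod.ext_iff, Ne, Prod.ext_iff]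
  constructor
  · intro h h1 h2 hne
    exact h ⟨by omega, h2, by omega⟩
  · intro h hss
    exact h (by omega) hss.2.1 (by omega)

theorem zero_notMem_carve : 0 ∉ carve ℓ σ q := fun h ↦
  Nat.not_lt_zero _ (mem_carve_iff.1 h).1

theorem exists_mem_carve (hq : q ∈ oddEvenPairs ℓ σ) (hx : q.1 < x ∧ x ≤ q.2) :
    ∃ q' ∈ oddEvenPairs ℓ σ, x ∈ carve ℓ σ q' := by
  obtain ⟨q', hq', hmin⟩ := ((oddEvenPairs ℓ σ).filter fun q' ↦ q'.1 < x ∧ x ≤ q'.2)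
    |>.exists_min_image (fun q' ↦ q'.2 - q'.1) ⟨q, mem_filter.2 ⟨hq, hx⟩⟩
  rw [mem_filter] at hq'
  refine ⟨q', hq'.1, mem_carve_iff.2 ⟨hq'.2.1, hq'.2.2, fun q'' hq'' h1 h2 hne hx'' ↦ ?_⟩⟩
  have := hmin q'' (mem_filter.2 ⟨hq'', hx''⟩)
  have : q''.1 ≠ q'.1 ∨ q''.2 ≠ q'.2 := by
    by_contra! h; exact hne (Prod.ext h.1 h.2)
  omega

theorem left_mem_carve (hσ : IsNCP Z σ) (hq : q ∈ oddEvenPairs ℓ σ) : q.1 + 1 ∈ carve ℓ σ q := by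
  have hlt := (mem_oddEvenPairs.1 hq).2.1
  refine mem_carve_iff.2 ⟨by omega, by omega, fun q' hq' h1 h2 hne hx ↦ ?_⟩
  have := oddEvenPairs_disjoint_or_nested hσ hq' hq hne
  omega

theorem right_mem_carve (hσ : IsNCP Z σ) (hq : q ∈ oddEvenPairs ℓ σ) : q.2 ∈ carve ℓ σ q := by
  have hlt := (mem_oddEvenPairs.1 hq).2.1
  refine mem_carve_iff.2 ⟨by omega, le_rfl, fun q' hq' h1 h2 hne hx ↦ ?_⟩
  have := oddEvenPairs_disjoint_or_nested hσ hq' hq hne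
  omega

theorem disjoint_carve (hσ : IsNCP Z σ) {q' : ℕ × ℕ} (hq : q ∈ oddEvenPairs ℓ σ)
    (hq' : q' ∈ oddEvenPairs ℓ σ) (hne : q ≠ q') : Disjoint (carve ℓ σ q) (carve ℓ σ q') := by
  refine disjoint_left.2 fun x hx hx' ↦ ?_
  rw [mem_carve_iff] at hx hx'
  rcases oddEvenPairs_disjoint_or_nested hσ hq hq' hne with h | h | h | h
  · omega
  · omega
  · exact hx.2.2 q' hq' h.1.le h.2.le hne.symm ⟨hx'.1, hx'.2.1⟩
  · exact hx'.2.2 q hq h.1.le h.2.le hne ⟨hx.1, hx.2.1⟩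

end Carve

def carvePartition (ℓ : ℕ) (σ : Finset (Finset ℕ)) : Finset (Finset ℕ) :=
  insert (Icc 0 ℓ \ (oddEvenPairs ℓ σ).biUnion (carve ℓ σ)) ((oddEvenPairs ℓ σ).image (carve ℓ σ))

section CarvePartition

variable {Z Z' : Finset ℕ} {ℓ : ℕ} {σ σ' : Finset (Finset ℕ)}

theorem zero_mem_sdiff_biUnion_carve : 0 ∈ Icc 0 ℓ \ (oddEvenPairs ℓ σ).biUnion (carve ℓ σ) :=
  mem_sdiff.2 ⟨by simp, by simp [mem_biUnion, zero_notMem_carve]⟩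

theorem filter_zero_notMem_carvePartition :
    (carvePartition ℓ σ).filter (0 ∉ ·) = (oddEvenPairs ℓ σ).image (carve ℓ σ) := by
  rw [carvePartition, filter_insert, if_neg (not_not.2 zero_mem_sdiff_biUnion_carve),
    filter_true_of_mem]
  intro L hL
  obtain ⟨q, -, rfl⟩ := mem_image.1 hL
  exact zero_notMem_carve

theorem mem_carvePartition {L : Finset ℕ} :
    L ∈ carvePartition ℓ σ ↔ L = Icc 0 ℓ \ (oddEvenPairs ℓ σ).biUnion (carve ℓ σ) ∨
      ∃ q ∈ oddEvenPairs ℓ σ, carve ℓ σ q = L := by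
  simp only [carvePartition, mem_insert, mem_image]

theorem eq_of_zero_mem_carvePartition {L : Finset ℕ} (hL : L ∈ carvePartition ℓ σ)
    (h0 : 0 ∈ L) : L = Icc 0 ℓ \ (oddEvenPairs ℓ σ).biUnion (carve ℓ σ) := by
  rcases mem_insert.1 hL with rfl | hL
  · rfl
  · obtain ⟨q, -, rfl⟩ := mem_image.1 hL
    exact absurd h0 zero_notMem_carve

theorem carvePartition_disjoint (hσ : IsNCP Z σ) {L L' : Finset ℕ} (hL : L ∈ carvePartition ℓ σ)
    (hL' : L' ∈ carvePartition ℓ σ) (hne : L ≠ L') : Disjoint L L' := by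
  rcases mem_carvePartition.1 hL with rfl | ⟨q, hq, rfl⟩ <;>
    rcases mem_carvePartition.1 hL' with rfl | ⟨q', hq', rfl⟩
  · exact absurd rfl hne
  · exact disjoint_left.2 fun x hx hx' ↦ (mem_sdiff.1 hx).2 (mem_biUnion.2 ⟨q', hq', hx'⟩)
  · exact disjoint_right.2 fun x hx hx' ↦ (mem_sdiff.1 hx).2 (mem_biUnion.2 ⟨q, hq, hx'⟩)
  · exact disjoint_carve hσ hq hq' fun h ↦ hne (h ▸ rfl)

theorem isNCP_carvePartition (hσ : IsNCP Z σ) : IsNCP (Icc 0 ℓ) (carvePartition ℓ σ) := by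
  have hcover : ∀ q ∈ oddEvenPairs ℓ σ, ∀ x, q.1 < x → x ≤ q.2 →
      x ∉ Icc 0 ℓ \ (oddEvenPairs ℓ σ).biUnion (carve ℓ σ) := fun q hq x h1 h2 hx ↦ by
    obtain ⟨q', hq', hxq'⟩ := exists_mem_carve hq ⟨h1, h2⟩
    exact (mem_sdiff.1 hx).2 (mem_biUnion.2 ⟨q', hq', hxq'⟩)
  refine ⟨isPartitionOf_of_disjoint (fun L hL ↦ ?_) (fun L hL ↦ ?_) (fun x hx ↦ ?_)
    (fun L hL L' hL' ↦ carvePartition_disjoint hσ hL hL'),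
    pairwiseNoncrossing_of_not_crossing (fun L hL L' hL' ↦ carvePartition_disjoint hσ hL hL')
      fun L hL L' hL' hne a ha b hb c hc d hd hac hcb hbd ↦ ?_⟩
  · rcases mem_carvePartition.1 hL with rfl | ⟨q, hq, rfl⟩
    · exact ⟨0, zero_mem_sdiff_biUnion_carve⟩
    · exact ⟨_, left_mem_carve hσ hq⟩
  · rcases mem_carvePartition.1 hL with rfl | ⟨q, hq, rfl⟩
    · exact sdiff_subset
    · intro x hx
      have := (mem_carve_iff.1 hx).2.1
      have := (mem_oddEvenPairs.1 hq).2.2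
      exact mem_Icc.2 ⟨Nat.zero_le _, by omega⟩
  · by_cases h : ∃ q ∈ oddEvenPairs ℓ σ, x ∈ carve ℓ σ q
    · obtain ⟨q, hq, hxq⟩ := h
      exact ⟨_, mem_carvePartition.2 (Or.inr ⟨q, hq, rfl⟩), hxq⟩
    · exact ⟨_, mem_carvePartition.2 (Or.inl rfl), by simpa [hx] using h⟩
  · rcases mem_carvePartition.1 hL with rfl | ⟨q, hq, rfl⟩ <;>
      rcases mem_carvePartition.1 hL' with rfl | ⟨q', hq', rfl⟩
    · exact hne rfl
    · rw [mem_carve_iff] at hc hd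
      exact hcover q' hq' b (by omega) (by omega) hb
    · rw [mem_carve_iff] at ha hb
      exact hcover q hq c (by omega) (by omega) hc
    · have hqq' : q ≠ q' := fun h ↦ hne (h ▸ rfl)
      rw [mem_carve_iff] at ha hb hc hd
      rcases oddEvenPairs_disjoint_or_nested hσ hq hq' hqq' with h | h | h | h
      · omega
      · omega
      · exact hb.2.2 q' hq' h.1.le h.2.le hqq'.symm ⟨by omega, by omega⟩
      · exact hc.2.2 q hq h.1.le h.2.le hqq' ⟨by omega, by omega⟩

theorem eq_of_carve_eq (hσ : IsNCP Z σ) (hσ' : IsNCP Z' σ') {q q' : ℕ × ℕ}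
    (hq : q ∈ oddEvenPairs ℓ σ) (hq' : q' ∈ oddEvenPairs ℓ σ')
    (h : carve ℓ σ q = carve ℓ σ' q') : q = q' := by
  have h1 := mem_carve_iff.1 (h ▸ left_mem_carve hσ hq)
  have h2 := mem_carve_iff.1 (h ▸ right_mem_carve hσ hq)
  have h3 := mem_carve_iff.1 (h.symm ▸ left_mem_carve hσ' hq')
  have h4 := mem_carve_iff.1 (h.symm ▸ right_mem_carve hσ' hq')
  exact Prod.ext (by omega) (by omega)

theorem oddEvenPairs_eq_of_carvePartition_eq (hσ : IsNCP Z σ) (hσ' : IsNCP Z' σ')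
    (h : carvePartition ℓ σ = carvePartition ℓ σ') : oddEvenPairs ℓ σ = oddEvenPairs ℓ σ' := by
  have himage := congrArg (filter (0 ∉ ·)) h
  rw [filter_zero_notMem_carvePartition, filter_zero_notMem_carvePartition] at himage
  ext q
  constructor
  · intro hq
    obtain ⟨q', hq', hqq'⟩ := mem_image.1 (himage ▸ mem_image_of_mem (carve ℓ σ) hq)
    rwa [eq_of_carve_eq hσ hσ' hq hq' hqq'.symm]
  · intro hq
    obtain ⟨q', hq', hqq'⟩ := mem_image.1 (himage.symm ▸ mem_image_of_mem (carve ℓ σ') hq)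
    rwa [eq_of_carve_eq hσ' hσ hq hq' hqq'.symm]

end CarvePartition

/-! ### A TL pattern is determined by its odd–even arcs -/

namespace IsTLPattern

variable {Z : Finset ℕ} {σ : Finset (Finset ℕ)} {C : Finset ℕ} {x : ℕ}

theorem exists_pair_of_even (hσ : IsTLPattern Z σ) (hC : C ∈ σ) (hx : x ∈ C) (hev : Even x) :
    ∃ p r, p < r ∧ C = {p, r} := by
  obtain ⟨-, -, _, -, d, hd, rfl, hpairs⟩ := hσ
  by_cases hCd : C = {d}
  · subst hCd
    rw [mem_singleton.1 hx] at hev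
    exact absurd hd (Nat.not_odd_iff_even.2 hev)
  · obtain ⟨p, r, hpr, rfl, -⟩ := hpairs C hC hCd
    exact ⟨p, r, hpr, rfl⟩

theorem exists_pair_of_mem_Ioo (hσ : IsTLPattern Z σ) {a b : ℕ} (hab : a < b)
    (hB : {a, b} ∈ σ) (hC : C ∈ σ) (hx : x ∈ C) (hax : a < x) (hxb : x < b) :
    ∃ c e, c < e ∧ C = {c, e} ∧ a < c ∧ e < b := by
  obtain ⟨hpart, hnc, _, -, d, -, rfl, hpairs⟩ := hσ
  have hCB : C ≠ {a, b} := by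
    rintro rfl
    simp only [mem_insert, mem_singleton] at hx
    omega
  have hBd : ({a, b} : Finset ℕ) ≠ {d} := fun h ↦ by
    have ha : a ∈ ({d} : Finset ℕ) := h ▸ by simp
    have hb : b ∈ ({d} : Finset ℕ) := h ▸ by simp
    simp only [mem_singleton] at ha hb
    omega
  obtain ⟨a', b', hab', hB', hside⟩ := hpairs _ hB hBd
  obtain ⟨rfl, rfl⟩ := eq_and_eq_of_pair_eq_pair hab hab' hB'
  by_cases hCd : C = {d}
  · subst hCd
    rw [mem_singleton.1 hx] at hax hxb
    omega
  obtain ⟨c, e, hce, rfl, -⟩ := hpairs C hC hCd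
  refine ⟨c, e, hce, rfl, ?_⟩
  have hne := fun {u v : ℕ} (hu : u ∈ ({c, e} : Finset ℕ)) (hv : v ∈ ({a, b} : Finset ℕ)) ↦
    hpart.ne_of_mem hC hB hCB hu hv
  have h1 : c ≠ a := hne (by simp) (by simp)
  have h2 : c ≠ b := hne (by simp) (by simp)
  have h3 : e ≠ a := hne (by simp) (by simp)
  have h4 : e ≠ b := hne (by simp) (by simp)
  have h5 : ¬(c < a ∧ a < e ∧ e < b) := fun h ↦
    hnc.not_crossing hC hB hCB (by simp) (by simp) (by simp) (by simp) h.1 h.2.1 h.2.2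
  have h6 : ¬(a < c ∧ c < b ∧ b < e) := fun h ↦
    hnc.not_crossing hB hC hCB.symm (by simp) (by simp) (by simp) (by simp) h.1 h.2.1 h.2.2
  simp only [mem_insert, mem_singleton] at hx
  omega

theorem odd_add {n : ℕ} (hσ : IsTLPattern (Icc 1 n) σ) {a b : ℕ} (hab : a < b) (hB : {a, b} ∈ σ) :
    Odd (a + b) := by
  have hsub : Ioo a b ⊆ Icc 1 n := by
    have ha := hσ.1.2.1 _ hB (by simp : a ∈ _)
    have hb := hσ.1.2.1 _ hB (by simp : b ∈ _)
    intro y hy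
    simp only [mem_Icc, mem_Ioo] at ha hb hy ⊢
    omega
  have hpairs : ∀ C ∈ σ, ∀ y ∈ C, y ∈ Ioo a b → #C = 2 ∧ C ⊆ Ioo a b := by
    intro C hC y hy hyab
    obtain ⟨c, e, hce, rfl, hac, heb⟩ :=
      hσ.exists_pair_of_mem_Ioo hab hB hC hy (mem_Ioo.1 hyab).1 (mem_Ioo.1 hyab).2
    refine ⟨card_pair hce.ne, fun z hz ↦ ?_⟩
    simp only [mem_insert, mem_singleton] at hz
    exact mem_Ioo.2 (by omega)
  have hcard := hσ.1.card_eq_sum_card_of_saturated hsub fun C hC y hy hyab ↦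
    (hpairs C hC y hy hyab).2
  have htwo : ∑ C ∈ σ.filter (· ⊆ Ioo a b), #C = #(σ.filter (· ⊆ Ioo a b)) * 2 :=
    sum_const_nat fun C hC ↦ by
      obtain ⟨hC, hCab⟩ := mem_filter.1 hC
      obtain ⟨y, hy⟩ := hσ.1.1 C hC
      exact (hpairs C hC y hy (hCab hy)).1
  rw [htwo, Nat.card_Ioo] at hcard
  exact ⟨a + #(σ.filter (· ⊆ Ioo a b)), by omega⟩

end IsTLPattern

section Uniqueness

variable {ℓ : ℕ} {σ σ' : Finset (Finset ℕ)}

theorem pair_mem_of_oddEvenPairs_eq_of_odd (hσ : IsPartitionOf (Icc 1 (2 * ℓ + 1)) σ)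
    (hE : oddEvenPairs ℓ σ = oddEvenPairs ℓ σ') {u v : ℕ} (huv : u < v) (hu : Odd u)
    (hv : Even v) (h : {u, v} ∈ σ) : {u, v} ∈ σ' := by
  have hvZ := mem_Icc.1 (hσ.2.1 _ h (by simp : v ∈ _))
  rw [Nat.odd_iff] at hu
  rw [Nat.even_iff] at hv
  have hq : (u / 2, v / 2) ∈ oddEvenPairs ℓ σ := by
    rw [mem_oddEvenPairs, show 2 * (u / 2) + 1 = u by omega, show 2 * (v / 2) = v by omega]
    exact ⟨h, by omega, by omega⟩
  rw [hE, mem_oddEvenPairs, show 2 * (u / 2) + 1 = u by omega,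
    show 2 * (v / 2) = v by omega] at hq
  exact hq.1

theorem IsTLPattern.pair_mem_of_saturated (hσ : IsTLPattern (Icc 1 (2 * ℓ + 1)) σ)
    (hσ' : IsTLPattern (Icc 1 (2 * ℓ + 1)) σ') (hE : oddEvenPairs ℓ σ = oddEvenPairs ℓ σ')
    {a b : ℕ} (hab : a < b) (hB : {a, b} ∈ σ) (ha : Even a)
    (hsat : ∀ C' ∈ σ', ∀ x ∈ C', a < x → x < b → C' ⊆ Ioo a b) : {a, b} ∈ σ' := by
  -- The arc of `σ'` at `a` can neither end at `a` (it would be odd–even, hence an arc of `σ`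
  -- meeting `{a, b}`), nor inside `(a, b)`, nor beyond `b` (the arc of `σ'` at `b` would then be
  -- odd–even or start inside `(a, b)`).
  have ha' := Nat.even_iff.1 ha
  have hpar := Nat.odd_iff.1 (hσ.odd_add hab hB)
  have hZ : ∀ {x}, x ∈ ({a, b} : Finset ℕ) → x ∈ Icc 1 (2 * ℓ + 1) := fun hx ↦ hσ.1.2.1 _ hB hx
  obtain ⟨A', hA', haA'⟩ := hσ'.1.exists_mem (hZ (mem_insert_self a {b}))
  obtain ⟨p, r, hpr, rfl⟩ := hσ'.exists_pair_of_even hA' haA' ha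
  simp only [mem_insert, mem_singleton] at haA'
  rcases haA' with rfl | rfl
  swap
  · have hp := Nat.odd_iff.1 (hσ'.odd_add hpr hA')
    have hpa := pair_mem_of_oddEvenPairs_eq_of_odd hσ'.1 hE.symm hpr
      (Nat.odd_iff.2 (by omega)) ha hA'
    have := hσ.1.eq_of_pair_mem_of_mem hpr hab hpa hB (by simp) (by simp : a ∈ _)
    omega
  rcases lt_trichotomy r b with hrb | rfl | hbr
  · have := hsat _ hA' r (by simp) hpr hrb (by simp : a ∈ _)
    simp at this
  · exact hA'
  obtain ⟨B', hB', hbB'⟩ := hσ'.1.exists_mem (hZ (by simp : b ∈ _))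
  obtain ⟨s, t, hst, rfl, has, htr⟩ := hσ'.exists_pair_of_mem_Ioo hpr hA' hB' hbB' hab hbr
  simp only [mem_insert, mem_singleton] at hbB'
  rcases hbB' with rfl | rfl
  · have ht := Nat.odd_iff.1 (hσ'.odd_add hst hB')
    have hbt := pair_mem_of_oddEvenPairs_eq_of_odd hσ'.1 hE.symm hst
      (Nat.odd_iff.2 (by omega)) (Nat.even_iff.2 (by omega)) hB'
    have := hσ.1.eq_of_pair_mem_of_mem hst hab hbt hB (by simp) (by simp : b ∈ _)
    omega
  · have := hsat _ hB' s (by simp) has hst (by simp : b ∈ _)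
    simp at this

theorem IsTLPattern.pair_mem_of_oddEvenPairs_eq (hσ : IsTLPattern (Icc 1 (2 * ℓ + 1)) σ)
    (hσ' : IsTLPattern (Icc 1 (2 * ℓ + 1)) σ') (hE : oddEvenPairs ℓ σ = oddEvenPairs ℓ σ')
    {a b : ℕ} (hab : a < b) (hB : {a, b} ∈ σ) : {a, b} ∈ σ' := by
  induction h : b - a using Nat.strong_induction_on generalizing a b with | _ n ih
  rcases Nat.even_or_odd a with ha | ha
  · refine hσ.pair_mem_of_saturated hσ' hE hab hB ha fun C' hC' x hxC' hax hxb ↦ ?_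
    obtain ⟨C, hC, hxC⟩ := hσ.1.exists_mem (hσ'.1.2.1 _ hC' hxC')
    obtain ⟨c, e, hce, rfl, hac, heb⟩ := hσ.exists_pair_of_mem_Ioo hab hB hC hxC hax hxb
    rw [hσ'.1.eq_of_mem_of_mem hC' (ih (e - c) (by omega) hce hC rfl) hxC' hxC]
    intro z hz
    simp only [mem_insert, mem_singleton] at hz
    exact mem_Ioo.2 (by omega)
  · have hpar := Nat.odd_iff.1 (hσ.odd_add hab hB)
    have ha' := Nat.odd_iff.1 ha
    exact pair_mem_of_oddEvenPairs_eq_of_odd hσ.1 hE hab ha (Nat.even_iff.2 (by omega)) hB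

theorem IsTLPattern.subset_of_oddEvenPairs_eq (hσ : IsTLPattern (Icc 1 (2 * ℓ + 1)) σ)
    (hσ' : IsTLPattern (Icc 1 (2 * ℓ + 1)) σ') (hE : oddEvenPairs ℓ σ = oddEvenPairs ℓ σ') :
    σ ⊆ σ' := by
  intro C hC
  obtain ⟨hpart, -, _, -, d, -, rfl, hpairs⟩ := id hσ
  by_cases hCd : C = {d}
  swap
  · obtain ⟨a, b, hab, rfl, -⟩ := hpairs C hC hCd
    exact hσ.pair_mem_of_oddEvenPairs_eq hσ' hE hab hC
  subst hCd
  obtain ⟨C', hC', hdC'⟩ := hσ'.1.exists_mem (hpart.2.1 _ hC (mem_singleton_self d))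
  obtain ⟨-, -, _, -, d', -, rfl, hpairs'⟩ := id hσ'
  by_cases hCd' : C' = {d'}
  · subst hCd'
    rwa [mem_singleton.1 hdC']
  · obtain ⟨p, r, hpr, rfl, -⟩ := hpairs' C' hC' hCd'
    have := hpart.eq_of_mem_of_mem (hσ'.pair_mem_of_oddEvenPairs_eq hσ hE.symm hpr hC') hC hdC'
      (mem_singleton_self d)
    have := congrArg card this
    rw [card_pair hpr.ne, card_singleton] at this
    omega

theorem IsTLPattern.eq_of_oddEvenPairs_eq (hσ : IsTLPattern (Icc 1 (2 * ℓ + 1)) σ)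
    (hσ' : IsTLPattern (Icc 1 (2 * ℓ + 1)) σ') (hE : oddEvenPairs ℓ σ = oddEvenPairs ℓ σ') :
    σ = σ' :=
  (hσ.subset_of_oddEvenPairs_eq hσ' hE).antisymm (hσ'.subset_of_oddEvenPairs_eq hσ hE.symm)

theorem injOn_carvePartition :
    Set.InjOn (carvePartition ℓ) {σ | IsTLPattern (Icc 1 (2 * ℓ + 1)) σ} := fun _ hσ _ hσ' h ↦
  hσ.eq_of_oddEvenPairs_eq hσ' (oddEvenPairs_eq_of_carvePartition_eq ⟨hσ.1, hσ.2.1⟩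
    ⟨hσ'.1, hσ'.2.1⟩ h)

end Uniqueness

/-! ### From noncrossing partitions to TL patterns -/

theorem IsNCP.image_erase_zero {n : ℕ} {M : Finset (Finset ℕ)} (hM : IsNCP (Icc 0 n) M)
    (h0 : {0} ∉ M) : IsNCP (Icc 1 n) (M.image (·.erase 0)) := by
  have hdisj : ∀ N ∈ M.image (·.erase 0), ∀ N' ∈ M.image (·.erase 0), N ≠ N' → Disjoint N N' := by
    intro N hN N' hN' hne
    obtain ⟨B, hB, rfl⟩ := mem_image.1 hN
    obtain ⟨B', hB', rfl⟩ := mem_image.1 hN'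
    refine Disjoint.mono (erase_subset _ _) (erase_subset _ _) (disjoint_left.2 fun x hx hx' ↦ ?_)
    exact hne (by rw [hM.1.eq_of_mem_of_mem hB hB' hx hx'])
  refine ⟨isPartitionOf_of_disjoint (fun N hN ↦ ?_) (fun N hN ↦ ?_) (fun x hx ↦ ?_) hdisj,
    pairwiseNoncrossing_of_not_crossing hdisj fun N hN N' hN' hne a ha b hb c hc d hd hac hcb hbd ↦
      ?_⟩
  · obtain ⟨B, hB, rfl⟩ := mem_image.1 hN
    rw [nonempty_iff_ne_empty, Ne, erase_eq_empty_iff]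
    rintro (rfl | rfl)
    · exact hM.1.1 ∅ hB |>.ne_empty rfl
    · exact h0 hB
  · obtain ⟨B, hB, rfl⟩ := mem_image.1 hN
    intro x hx
    obtain ⟨hx0, hxB⟩ := mem_erase.1 hx
    have := mem_Icc.1 (hM.1.2.1 B hB hxB)
    exact mem_Icc.2 ⟨by omega, this.2⟩
  · obtain ⟨B, hB, hxB⟩ := hM.1.exists_mem (Icc_subset_Icc_left (Nat.zero_le 1) hx)
    exact ⟨_, mem_image_of_mem _ hB, mem_erase.2 ⟨(by have := (mem_Icc.1 hx).1; omega), hxB⟩⟩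
  · obtain ⟨B, hB, rfl⟩ := mem_image.1 hN
    obtain ⟨B', hB', rfl⟩ := mem_image.1 hN'
    exact hM.2.not_crossing hB hB' (by rintro rfl; exact hne rfl) (mem_of_mem_erase ha)
      (mem_of_mem_erase hb) (mem_of_mem_erase hc) (mem_of_mem_erase hd) hac hcb hbd

theorem isTLPattern_image_erase_zero {n d : ℕ} {M : Finset (Finset ℕ)} (hM : IsNCP (Icc 0 n) M)
    (hpairs : ∀ B ∈ M, ∃ a b, a < b ∧ B = {a, b}) (hd : Odd d) (h0 : {0, d} ∈ M) :
    IsTLPattern (Icc 1 n) (M.image (·.erase 0)) := by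
  have herase : ({0, d} : Finset ℕ).erase 0 = {d} := by
    rw [erase_insert_eq_erase, erase_eq_of_notMem]
    rintro h
    rw [← mem_singleton.1 h] at hd
    simp at hd
  have hM' := hM.image_erase_zero fun h ↦ by
    obtain ⟨a, b, hab, hab0⟩ := hpairs _ h
    have ha : a ∈ ({0} : Finset ℕ) := hab0 ▸ mem_insert_self a {b}
    have hb : b ∈ ({0} : Finset ℕ) := hab0 ▸ by simp
    simp only [mem_singleton] at ha hb
    omega
  refine ⟨hM'.1, hM'.2, {d}, mem_image.2 ⟨_, h0, herase⟩, d, hd, rfl, fun N hN hNd ↦ ?_⟩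
  obtain ⟨B, hB, rfl⟩ := mem_image.1 hN
  have hB0 : B ≠ {0, d} := by rintro rfl; exact hNd herase
  obtain ⟨a, b, hab, rfl⟩ := hpairs B hB
  have hne := fun {x y : ℕ} (hx : x ∈ ({a, b} : Finset ℕ)) (hy : y ∈ ({0, d} : Finset ℕ)) ↦
    hM.1.ne_of_mem hB h0 hB0 hx hy
  have h1 : a ≠ 0 := hne (by simp) (by simp)
  have h2 : a ≠ d := hne (by simp) (by simp)
  have h3 : b ≠ d := hne (by simp) (by simp)
  have h4 : ¬(0 < a ∧ a < d ∧ d < b) := fun h ↦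
    hM.2.not_crossing h0 hB hB0.symm (by simp) (by simp) (by simp) (by simp) h.1 h.2.1 h.2.2
  refine ⟨a, b, hab, erase_eq_of_notMem ?_, by omega⟩
  simp only [mem_insert, mem_singleton]
  omega

def IsCyclicSucc (L : Finset ℕ) (i j : ℕ) : Prop :=
  i ∈ L ∧ j ∈ L ∧ ((i < j ∧ ∀ k ∈ L, ¬(i < k ∧ k < j)) ∨ (j ≤ i ∧ ∀ k ∈ L, j ≤ k ∧ k ≤ i))

namespace IsCyclicSucc

variable {L : Finset ℕ} {i j : ℕ}

theorem exists_right (hi : i ∈ L) : ∃ j, IsCyclicSucc L i j := by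
  by_cases h : (L.filter (i < ·)).Nonempty
  · obtain ⟨hj, hij⟩ := mem_filter.1 ((L.filter (i < ·)).min'_mem h)
    refine ⟨_, hi, hj, Or.inl ⟨hij, fun k hk hik ↦ ?_⟩⟩
    exact (min'_le _ k (mem_filter.2 ⟨hk, hik.1⟩)).not_gt hik.2
  · refine ⟨L.min' ⟨i, hi⟩, hi, min'_mem _ _, Or.inr ⟨min'_le _ _ hi, fun k hk ↦
      ⟨min'_le _ _ hk, ?_⟩⟩⟩
    by_contra hik
    exact h ⟨k, mem_filter.2 ⟨hk, by omega⟩⟩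

theorem exists_left (hj : j ∈ L) : ∃ i, IsCyclicSucc L i j := by
  by_cases h : (L.filter (· < j)).Nonempty
  · obtain ⟨hi, hij⟩ := mem_filter.1 ((L.filter (· < j)).max'_mem h)
    refine ⟨_, hi, hj, Or.inl ⟨hij, fun k hk hik ↦ ?_⟩⟩
    exact (le_max' _ k (mem_filter.2 ⟨hk, hik.2⟩)).not_gt hik.1
  · refine ⟨L.max' ⟨j, hj⟩, max'_mem _ _, hj, Or.inr ⟨le_max' _ _ hj, fun k hk ↦
      ⟨?_, le_max' _ _ hk⟩⟩⟩
    by_contra hkj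
    exact h ⟨k, mem_filter.2 ⟨hk, by omega⟩⟩

theorem right_unique {j' : ℕ} (h : IsCyclicSucc L i j) (h' : IsCyclicSucc L i j') : j = j' := by
  obtain ⟨-, hj, h⟩ := h
  obtain ⟨-, hj', h'⟩ := h'
  rcases h with ⟨h1, h2⟩ | ⟨h1, h2⟩ <;> rcases h' with ⟨h1', h2'⟩ | ⟨h1', h2'⟩
  all_goals
    have := h2 j' hj'
    have := h2' j hj
    omega

theorem left_unique {i' : ℕ} (h : IsCyclicSucc L i j) (h' : IsCyclicSucc L i' j) : i = i' := by
  obtain ⟨hi, -, h⟩ := h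
  obtain ⟨hi', -, h'⟩ := h'
  rcases h with ⟨h1, h2⟩ | ⟨h1, h2⟩ <;> rcases h' with ⟨h1', h2'⟩ | ⟨h1', h2'⟩
  all_goals
    have := h2 i' hi'
    have := h2' i hi
    omega

theorem not_crossing {i' j' a b c d : ℕ} (h : IsCyclicSucc L i j) (h' : IsCyclicSucc L i' j')
    (hne : i ≠ i') (ha : a ∈ ({2 * i + 1, 2 * j} : Finset ℕ))
    (hb : b ∈ ({2 * i + 1, 2 * j} : Finset ℕ)) (hc : c ∈ ({2 * i' + 1, 2 * j'} : Finset ℕ))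
    (hd : d ∈ ({2 * i' + 1, 2 * j'} : Finset ℕ)) (hac : a < c) (hcb : c < b) (hbd : b < d) :
    False := by
  have hjj : j ≠ j' := fun e ↦ hne (h.left_unique (e ▸ h'))
  obtain ⟨hi, hj, h⟩ := h
  obtain ⟨hi', hj', h'⟩ := h'
  simp only [mem_insert, mem_singleton] at ha hb hc hd
  rcases h with ⟨h1, h2⟩ | ⟨h1, h2⟩ <;> rcases h' with ⟨h1', h2'⟩ | ⟨h1', h2'⟩
  all_goals
    have := h2 i' hi'
    have := h2 j' hj'
    have := h2' i hi
    have := h2' j hj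
    omega

theorem half_mem {x : ℕ} (h : IsCyclicSucc L i j) (hx : x ∈ ({2 * i + 1, 2 * j} : Finset ℕ)) :
    x / 2 ∈ L := by
  simp only [mem_insert, mem_singleton] at hx
  rcases hx with rfl | rfl
  · rw [show (2 * i + 1) / 2 = i by omega]; exact h.1
  · rw [show 2 * j / 2 = j by omega]; exact h.2.1

end IsCyclicSucc

theorem IsPartitionOf.exists_superset_of_isCyclicSucc {B L : Finset ℕ} {P : Finset (Finset ℕ)}
    (hP : IsPartitionOf B P) (hLB : L ⊆ B) (hL : L.Nonempty)
    (h : ∀ i j, IsCyclicSucc L i j → ∃ L' ∈ P, i ∈ L' ∧ j ∈ L') : ∃ L' ∈ P, L ⊆ L' := by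
  obtain ⟨L', hL', hmin⟩ := hP.exists_mem (hLB (L.min'_mem hL))
  refine ⟨L', hL', fun j hj ↦ ?_⟩
  induction j using Nat.strong_induction_on with | _ j ih
  obtain ⟨i, hij⟩ := IsCyclicSucc.exists_left hj
  obtain ⟨hi, -, hij'⟩ := id hij
  rcases hij' with ⟨hlt, -⟩ | ⟨-, hle⟩
  · obtain ⟨L'', hL'', hiL'', hjL''⟩ := h i j hij
    rwa [hP.eq_of_mem_of_mem hL' hL'' (ih i hlt hi) hiL'']
  · rwa [← le_antisymm (hle _ (L.min'_mem hL)).1 (L.min'_le j hj)] at hmin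

open Classical in
/-- Splitting each point `i` into `2i < 2i+1` and joining `2i+1` to `2j` whenever `j` follows `i`
cyclically in its block is the classical bijection between the NCPs of `n` points and the
noncrossing perfect matchings of `2n` points. -/
noncomputable def cyclicMatching (P : Finset (Finset ℕ)) : Finset (Finset ℕ) :=
  P.biUnion fun L ↦ ((L ×ˢ L).filter fun p ↦ IsCyclicSucc L p.1 p.2).image
    fun p ↦ {2 * p.1 + 1, 2 * p.2}

section CyclicMatching

variable {ℓ : ℕ} {P P' : Finset (Finset ℕ)} {M : Finset ℕ}

theorem mem_cyclicMatching :
    M ∈ cyclicMatching P ↔ ∃ L ∈ P, ∃ i j, IsCyclicSucc L i j ∧ M = {2 * i + 1, 2 * j} := by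
  simp only [cyclicMatching, mem_biUnion, mem_image, mem_filter, mem_product, Prod.exists]
  constructor
  · rintro ⟨L, hL, i, j, ⟨-, h⟩, rfl⟩
    exact ⟨L, hL, i, j, h, rfl⟩
  · rintro ⟨L, hL, i, j, h, rfl⟩
    exact ⟨L, hL, i, j, ⟨⟨h.1, h.2.1⟩, h⟩, rfl⟩

theorem cyclicMatching_disjoint (hP : IsNCP (Icc 0 ℓ) P) {M' : Finset ℕ}
    (hM : M ∈ cyclicMatching P) (hM' : M' ∈ cyclicMatching P) (hne : M ≠ M') : Disjoint M M' := by
  obtain ⟨L, hL, i, j, h, rfl⟩ := mem_cyclicMatching.1 hM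
  obtain ⟨L', hL', i', j', h', rfl⟩ := mem_cyclicMatching.1 hM'
  refine disjoint_left.2 fun x hx hx' ↦ hne ?_
  simp only [mem_insert, mem_singleton] at hx hx'
  rcases hx with rfl | rfl <;> rcases hx' with hx' | hx'
  · obtain rfl : i = i' := by omega
    obtain rfl := hP.1.eq_of_mem_of_mem hL hL' h.1 h'.1
    rw [h.right_unique h']
  · omega
  · omega
  · obtain rfl : j = j' := by omega
    obtain rfl := hP.1.eq_of_mem_of_mem hL hL' h.2.1 h'.2.1
    rw [h.left_unique h']

theorem isNCP_cyclicMatching (hP : IsNCP (Icc 0 ℓ) P) :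
    IsNCP (Icc 0 (2 * ℓ + 1)) (cyclicMatching P) := by
  refine ⟨isPartitionOf_of_disjoint (fun M hM ↦ ?_) (fun M hM ↦ ?_) (fun x hx ↦ ?_)
    (fun M hM M' hM' ↦ cyclicMatching_disjoint hP hM hM'),
    pairwiseNoncrossing_of_not_crossing (fun M hM M' hM' ↦ cyclicMatching_disjoint hP hM hM')
      fun M hM M' hM' hne a ha b hb c hc d hd hac hcb hbd ↦ ?_⟩
  · obtain ⟨L, -, i, j, -, rfl⟩ := mem_cyclicMatching.1 hM
    exact insert_nonempty _ _
  · obtain ⟨L, hL, i, j, h, rfl⟩ := mem_cyclicMatching.1 hM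
    intro x hx
    have := mem_Icc.1 (hP.1.2.1 L hL (h.half_mem hx))
    simp only [mem_insert, mem_singleton] at hx
    exact mem_Icc.2 ⟨Nat.zero_le _, by omega⟩
  · obtain ⟨L, hL, hxL⟩ := hP.1.exists_mem (mem_Icc.2 ⟨Nat.zero_le (x / 2),
      by have := (mem_Icc.1 hx).2; omega⟩)
    rcases Nat.mod_two_eq_zero_or_one x with hx2 | hx2
    · obtain ⟨i, h⟩ := IsCyclicSucc.exists_left hxL
      exact ⟨_, mem_cyclicMatching.2 ⟨L, hL, i, x / 2, h, rfl⟩, by simp; omega⟩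
    · obtain ⟨j, h⟩ := IsCyclicSucc.exists_right hxL
      exact ⟨_, mem_cyclicMatching.2 ⟨L, hL, x / 2, j, h, rfl⟩, by simp; omega⟩
  · obtain ⟨L, hL, i, j, h, rfl⟩ := mem_cyclicMatching.1 hM
    obtain ⟨L', hL', i', j', h', rfl⟩ := mem_cyclicMatching.1 hM'
    by_cases hLL : L = L'
    · subst hLL
      exact h.not_crossing h' (fun e ↦ hne (by rw [e, h.right_unique (e ▸ h')])) ha hb hc hd
        hac hcb hbd
    · have ha := h.half_mem ha
      have hb := h.half_mem hb
      have hc := h'.half_mem hc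
      have hd := h'.half_mem hd
      have := hP.1.ne_of_mem hL hL' hLL ha hc
      have := hP.1.ne_of_mem hL hL' hLL hb hc
      have := hP.1.ne_of_mem hL hL' hLL hb hd
      exact hP.2.not_crossing hL hL' hLL ha hb hc hd (by omega) (by omega) (by omega)

noncomputable def tlPatternOfNCP (P : Finset (Finset ℕ)) : Finset (Finset ℕ) :=
  (cyclicMatching P).image (·.erase 0)

theorem isTLPattern_tlPatternOfNCP (hP : IsNCP (Icc 0 ℓ) P) :
    IsTLPattern (Icc 1 (2 * ℓ + 1)) (tlPatternOfNCP P) := by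
  obtain ⟨L, hL, h0L⟩ := hP.1.exists_mem (mem_Icc.2 ⟨le_rfl, Nat.zero_le ℓ⟩)
  obtain ⟨i, hi⟩ := IsCyclicSucc.exists_left h0L
  refine isTLPattern_image_erase_zero (isNCP_cyclicMatching hP) (fun B hB ↦ ?_)
    (odd_two_mul_add_one i) ?_
  · obtain ⟨L, -, i, j, -, rfl⟩ := mem_cyclicMatching.1 hB
    rcases lt_or_gt_of_ne (show 2 * i + 1 ≠ 2 * j by omega) with h | h
    · exact ⟨_, _, h, rfl⟩
    · exact ⟨_, _, h, pair_comm _ _⟩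
  · rw [pair_comm]
    exact mem_cyclicMatching.2 ⟨L, hL, i, 0, hi, rfl⟩

theorem exists_mem_mem_of_tlPatternOfNCP_eq (h : tlPatternOfNCP P = tlPatternOfNCP P')
    {L : Finset ℕ} (hL : L ∈ P) {i j : ℕ} (hij : IsCyclicSucc L i j) :
    ∃ L' ∈ P', i ∈ L' ∧ j ∈ L' := by
  have hmem : ({2 * i + 1, 2 * j} : Finset ℕ).erase 0 ∈ tlPatternOfNCP P' :=
    h ▸ mem_image_of_mem _ (mem_cyclicMatching.2 ⟨L, hL, i, j, hij, rfl⟩)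
  obtain ⟨M, hM, hMeq⟩ := mem_image.1 hmem
  obtain ⟨L', hL', i', j', h', rfl⟩ := mem_cyclicMatching.1 hM
  have hi : 2 * i + 1 ∈ ({2 * i' + 1, 2 * j'} : Finset ℕ).erase 0 := hMeq ▸ by simp
  have hj : j ≠ 0 → 2 * j ∈ ({2 * i' + 1, 2 * j'} : Finset ℕ).erase 0 := fun hj ↦
    hMeq ▸ by simp [hj]
  have hj' : j' ≠ 0 → 2 * j' ∈ ({2 * i + 1, 2 * j} : Finset ℕ).erase 0 := fun hj' ↦
    hMeq.symm ▸ by simp [hj']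
  simp only [mem_erase, mem_insert, mem_singleton] at hi hj hj'
  obtain rfl : i = i' := by omega
  obtain rfl : j = j' := by omega
  exact ⟨L', hL', h'.1, h'.2.1⟩

theorem injOn_tlPatternOfNCP : Set.InjOn tlPatternOfNCP {P | IsNCP (Icc 0 ℓ) P} := by
  intro P hP P' hP' h
  refine hP.1.eq_of_forall_exists_superset hP'.1 (fun L hL ↦ ?_) (fun L hL ↦ ?_)
  · exact hP'.1.exists_superset_of_isCyclicSucc (hP.1.2.1 L hL) (hP.1.1 L hL)
      fun i j ↦ exists_mem_mem_of_tlPatternOfNCP_eq h hL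
  · exact hP.1.exists_superset_of_isCyclicSucc (hP'.1.2.1 L hL) (hP'.1.1 L hL)
      fun i j ↦ exists_mem_mem_of_tlPatternOfNCP_eq h.symm hL

end CyclicMatching

theorem stmt7_general (ℓ : ℕ) :
    ∃ Φ : Finset (Finset ℕ) → Finset (Finset ℕ),
      Set.BijOn Φ {σ | IsTLPattern (Finset.Icc 1 (2 * ℓ + 1)) σ}
        {P | IsNCP (Finset.Icc 0 ℓ) P} ∧
      ∀ σ, IsTLPattern (Finset.Icc 1 (2 * ℓ + 1)) σ →
        (Φ σ).filter (fun L => 0 ∉ L) = (oddEvenPairs ℓ σ).image (carve ℓ σ) ∧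
        ∀ L ∈ Φ σ, 0 ∈ L →
          L = Finset.Icc 0 ℓ \ (oddEvenPairs ℓ σ).biUnion (carve ℓ σ) := by
  refine ⟨carvePartition ℓ, ?_, fun σ _ ↦
    ⟨filter_zero_notMem_carvePartition, fun L ↦ eq_of_zero_mem_carvePartition⟩⟩
  exact Set.BijOn.of_injOn_of_injOn
    ((finite_setOf_isPartitionOf _).subset fun _ hσ ↦ hσ.1)
    ((finite_setOf_isPartitionOf _).subset fun _ hP ↦ hP.1)
    (fun _ hσ ↦ isNCP_carvePartition ⟨hσ.1, hσ.2.1⟩) injOn_carvePartition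
    (fun _ ↦ isTLPattern_tlPatternOfNCP) injOn_tlPatternOfNCP

/-- There is a bijection `Φ` from the TL patterns of `{1, …, 2ℓ+1}` to the NCPs of
`{0, 1, …, ℓ}` such that, for a TL pattern `σ` with odd-below-even blocks
`{2a_j+1, 2b_j}`, the blocks of `Φ σ` not containing `0` are exactly the sets
`carve ℓ σ (a_j, b_j)` and the block containing `0` is the complement of their
union in `{0, …, ℓ}`. -/
theorem stmt7 (ℓ : ℕ) (hℓ : 1 ≤ ℓ) :
    ∃ Φ : Finset (Finset ℕ) → Finset (Finset ℕ),
      Set.BijOn Φ {σ | IsTLPattern (Finset.Icc 1 (2 * ℓ + 1)) σ}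
        {P | IsNCP (Finset.Icc 0 ℓ) P} ∧
      ∀ σ, IsTLPattern (Finset.Icc 1 (2 * ℓ + 1)) σ →
        (Φ σ).filter (fun L => 0 ∉ L) = (oddEvenPairs ℓ σ).image (carve ℓ σ) ∧
        ∀ L ∈ Φ σ, 0 ∈ L →
          L = Finset.Icc 0 ℓ \ (oddEvenPairs ℓ σ).biUnion (carve ℓ σ) :=
  stmt7_general ℓ
end

section
/- Let B be a finite set of natural numbers and let 𝓟 and 𝓠 be two noncrossing partitions of B. If {(min L, max L) : L a block of 𝓟} = {(min L, max L) : L a block of 𝓠} as sets of pairs, then 𝓟 = 𝓠. In other words, a noncrossing partition of B is uniquely determined by the pairs (minimum, maximum) of its blocks. -/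
/-- Two blocks of a partition sharing an element are equal. -/
lemma block_eq_of_mem {B : Finset ℕ} {P : Finset (Finset ℕ)} (hP : IsPartitionOf B P)
    {L L' : Finset ℕ} (hL : L ∈ P) (hL' : L' ∈ P) {x : ℕ} (hx : x ∈ L) (hx' : x ∈ L') :
    L = L' := by
  have hB : x ∈ B := hP.2.1 L hL hx
  obtain ⟨M, _, hMu⟩ := hP.2.2 x hB
  rw [hMu L ⟨hL, hx⟩, hMu L' ⟨hL', hx'⟩]

/-- Key minimality lemma: the interval of the block of `x` is contained in the
interval of any block whose interval contains `x`. -/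
lemma interval_min {B : Finset ℕ} {P : Finset (Finset ℕ)} (hP : IsNCP B P)
    {L : Finset ℕ} (hL : L ∈ P) {x : ℕ} (hx : x ∈ L)
    {c d : ℕ} (hc : IsLeast (L : Set ℕ) c) (hd : IsGreatest (L : Set ℕ) d)
    {L' : Finset ℕ} (hL' : L' ∈ P) {c' d' : ℕ}
    (hc' : IsLeast (L' : Set ℕ) c') (hd' : IsGreatest (L' : Set ℕ) d')
    (h1 : c' ≤ x) (h2 : x ≤ d') : c' ≤ c ∧ d ≤ d' := by
  by_cases hne : L = L'
  · subst hne
    exact ⟨le_of_eq (hc'.unique hc), le_of_eq (hd.unique hd')⟩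
  · have hcL : c ∈ L := hc.1
    have hdL : d ∈ L := hd.1
    have hc'L : c' ∈ L' := hc'.1
    have hd'L : d' ∈ L' := hd'.1
    have hcx : c ≤ x := hc.2 hx
    have hxd : x ≤ d := hd.2 hx
    have hc'd' : c' ≤ d' := le_trans h1 h2
    constructor
    · -- use interval [c, x] in L vs [c', d'] in L'
      rcases hP.2 L hL L' hL' hne c hcL x hx c' hc'L d' hd'L hcx hc'd' with hdisj | hsub | hsub
      · exfalso
        have : x ∈ Finset.Icc c x ∩ Finset.Icc c' d' :=
          Finset.mem_inter.2 ⟨Finset.mem_Icc.2 ⟨hcx, le_refl x⟩, Finset.mem_Icc.2 ⟨h1, h2⟩⟩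
        rw [hdisj] at this
        exact Finset.notMem_empty x this
      · exact (Finset.mem_Icc.1 (hsub (Finset.mem_Icc.2 ⟨le_refl c, hcx⟩))).1
      · -- [c',d'] ⊆ [c,x] forces d' ≤ x, so x = d' ∈ L' ∩ L, contradiction
        exfalso
        have hd'x : d' ≤ x := (Finset.mem_Icc.1 (hsub (Finset.mem_Icc.2 ⟨hc'd', le_refl d'⟩))).2
        have : x = d' := le_antisymm h2 hd'x
        exact hne (block_eq_of_mem hP.1 hL hL' hx (this ▸ hd'L))
    · -- use interval [x, d] in L vs [c', d'] in L'
      rcases hP.2 L hL L' hL' hne x hx d hdL c' hc'L d' hd'L hxd hc'd' with hdisj | hsub | hsub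
      · exfalso
        have : x ∈ Finset.Icc x d ∩ Finset.Icc c' d' :=
          Finset.mem_inter.2 ⟨Finset.mem_Icc.2 ⟨le_refl x, hxd⟩, Finset.mem_Icc.2 ⟨h1, h2⟩⟩
        rw [hdisj] at this
        exact Finset.notMem_empty x this
      · exact (Finset.mem_Icc.1 (hsub (Finset.mem_Icc.2 ⟨hxd, le_refl d⟩))).2
      · exfalso
        have hxc' : x ≤ c' := (Finset.mem_Icc.1 (hsub (Finset.mem_Icc.2 ⟨le_refl c', hc'd'⟩))).1
        have : x = c' := le_antisymm hxc' h1
        exact hne (block_eq_of_mem hP.1 hL hL' hx (this ▸ hc'L))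

/-- The least and greatest elements of a nonempty finset. -/
lemma finset_least_greatest {L : Finset ℕ} (hne : L.Nonempty) :
    IsLeast (L : Set ℕ) (L.min' hne) ∧ IsGreatest (L : Set ℕ) (L.max' hne) :=
  ⟨⟨L.min'_mem hne, fun y hy => L.min'_le y hy⟩,
   ⟨L.max'_mem hne, fun y hy => L.le_max' y hy⟩⟩

/-- One inclusion; the theorem follows by symmetry. -/
lemma ncp_subset (B : Finset ℕ) (P Q : Finset (Finset ℕ))
    (hP : IsNCP B P) (hQ : IsNCP B Q)
    (h : {q : ℕ × ℕ | ∃ L ∈ P, IsLeast (L : Set ℕ) q.1 ∧ IsGreatest (L : Set ℕ) q.2} =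
         {q : ℕ × ℕ | ∃ L ∈ Q, IsLeast (L : Set ℕ) q.1 ∧ IsGreatest (L : Set ℕ) q.2}) :
    P ⊆ Q := by
  intro L hL
  have hLne : L.Nonempty := hP.1.1 L hL
  obtain ⟨hc, hd⟩ := finset_least_greatest hLne
  set c := L.min' hLne
  set d := L.max' hLne
  -- the pair (c,d) belongs to the Q-side set
  have hpair : (c, d) ∈ {q : ℕ × ℕ | ∃ L ∈ Q, IsLeast (L : Set ℕ) q.1 ∧ IsGreatest (L : Set ℕ) q.2} := by
    rw [← h]; exact ⟨L, hL, hc, hd⟩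
  obtain ⟨K, hK, hKc, hKd⟩ := hpair
  suffices hLK : L = K by rw [hLK]; exact hK
  -- common characterization of "pair of the block of x"
  ext x
  constructor
  · intro hx
    have hxB : x ∈ B := hP.1.2.1 L hL hx
    obtain ⟨K', ⟨hK', hxK'⟩, _⟩ := hQ.1.2.2 x hxB
    have hK'ne : K'.Nonempty := hQ.1.1 K' hK'
    obtain ⟨hc', hd'⟩ := finset_least_greatest hK'ne
    -- the pair of K' belongs to the P-side set
    have hpair' : (K'.min' hK'ne, K'.max' hK'ne) ∈
        {q : ℕ × ℕ | ∃ L ∈ P, IsLeast (L : Set ℕ) q.1 ∧ IsGreatest (L : Set ℕ) q.2} := by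
      rw [h]; exact ⟨K', hK', hc', hd'⟩
    obtain ⟨J, hJ, hJc, hJd⟩ := hpair'
    -- minimality both ways between intervals of L (in P / via J) and K' (in Q / via K)
    have h1 : K'.min' hK'ne ≤ x := hc'.2 hxK'
    have h2 : x ≤ K'.max' hK'ne := hd'.2 hxK'
    have hmin1 := interval_min hP hL hx hc hd hJ hJc hJd h1 h2
    have hmin2 := interval_min hQ hK' hxK' hc' hd' hK hKc hKd (hc.2 hx) (hd.2 hx)
    -- so intervals are equal, hence K'.min' = c, and K' = K since both contain c
    have hcc : K'.min' hK'ne = c := le_antisymm hmin1.1 hmin2.1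
    have : K' = K := block_eq_of_mem hQ.1 hK' hK (hcc ▸ hc'.1) hKc.1
    rw [← this]
    exact hxK'
  · intro hx
    have hxB : x ∈ B := hQ.1.2.1 K hK hx
    obtain ⟨J, ⟨hJ, hxJ⟩, _⟩ := hP.1.2.2 x hxB
    have hJne : J.Nonempty := hP.1.1 J hJ
    obtain ⟨hJc, hJd⟩ := finset_least_greatest hJne
    have hpair' : (J.min' hJne, J.max' hJne) ∈
        {q : ℕ × ℕ | ∃ L ∈ Q, IsLeast (L : Set ℕ) q.1 ∧ IsGreatest (L : Set ℕ) q.2} := by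
      rw [← h]; exact ⟨J, hJ, hJc, hJd⟩
    obtain ⟨K'', hK'', hK''c, hK''d⟩ := hpair'
    have h1 : J.min' hJne ≤ x := hJc.2 hxJ
    have h2 : x ≤ J.max' hJne := hJd.2 hxJ
    have hmin1 := interval_min hQ hK hx hKc hKd hK'' hK''c hK''d h1 h2
    have hmin2 := interval_min hP hJ hxJ hJc hJd hL hc hd (hKc.2 hx) (hKd.2 hx)
    have hcc : J.min' hJne = c := le_antisymm hmin1.1 hmin2.1
    have : J = L := block_eq_of_mem hP.1 hJ hL (hcc ▸ hJc.1) hc.1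
    rw [← this]
    exact hxJ

/-- A noncrossing partition of a finite set `B ⊆ ℕ` is uniquely determined by the
pairs (minimum, maximum) of its blocks. -/
theorem stmt8 (B : Finset ℕ) (P Q : Finset (Finset ℕ))
    (hP : IsNCP B P) (hQ : IsNCP B Q)
    (h : {q : ℕ × ℕ | ∃ L ∈ P, IsLeast (L : Set ℕ) q.1 ∧ IsGreatest (L : Set ℕ) q.2} =
         {q : ℕ × ℕ | ∃ L ∈ Q, IsLeast (L : Set ℕ) q.1 ∧ IsGreatest (L : Set ℕ) q.2}) :
    P = Q :=
  Finset.Subset.antisymm (ncp_subset B P Q hP hQ h) (ncp_subset B Q P hQ hP h.symm)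
end

section
/- Let B be a finite set of natural numbers, let 𝓟 be a noncrossing partition of B, and let L be a block of 𝓟. Write I_{L'} = [min L', max L'] (interval of integers) for each block L' of 𝓟. Then L = (B ∩ I_L) ∖ ⋃ {I_{L'} : L' a block of 𝓟 with I_{L'} ⊊ I_L}. That is, each block of a noncrossing partition equals the elements of B in its min–max interval that do not lie in any strictly smaller min–max interval of another block contained in it. -/
/-- The min–max interval `I_L = [min L, max L]` of a block, as a set of naturals. -/
def mmInterval (L : Finset ℕ) : Set ℕ := Set.Icc (sInf (L : Set ℕ)) (sSup (L : Set ℕ))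

/-!
Two distinct blocks of a noncrossing partition can never interleave as `a < c < b < d` with
`a, b` in one block and `c, d` in the other. Hence an element of a block `L` avoids the
min–max interval of every block nested strictly inside `I_L`, and conversely an element
`x ∈ B ∩ I_L` lying in another block `M` forces `I_M` and `I_L` to be nested (they meet at `x`),
distinct (their minima lie in different blocks), and not with `I_L ⊊ I_M` (by the first
observation applied to `M`); so `I_M ⊊ I_L` and `x` is removed.
-/

theorem IsPartitionOf.eq_of_mem_of_mem_s9 {B : Finset ℕ} {P : Finset (Finset ℕ)}
    (hP : IsPartitionOf B P) {L M : Finset ℕ} (hL : L ∈ P) (hM : M ∈ P) {x : ℕ}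
    (hxL : x ∈ L) (hxM : x ∈ M) : L = M :=
  (hP.2.2 x (hP.2.1 L hL hxL)).unique ⟨hL, hxL⟩ ⟨hM, hxM⟩

namespace PairwiseNoncrossing

variable {P : Finset (Finset ℕ)} (hNC : PairwiseNoncrossing P) {L M : Finset ℕ}
  (hL : L ∈ P) (hM : M ∈ P) (hLM : L ≠ M) {a b c d : ℕ}
  (ha : a ∈ L) (hb : b ∈ L) (hc : c ∈ M) (hd : d ∈ M)
include hNC hL hM hLM ha hb hc hd

theorem not_interleaved (hac : a < c) (hcb : c < b) (hbd : b < d) : False := by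
  rcases hNC L hL M hM hLM a ha b hb c hc d hd (hac.trans hcb).le (hcb.trans hbd).le
    with h | h | h
  · simpa [h] using Finset.mem_inter.2
      ⟨Finset.mem_Icc.2 ⟨hac.le, hcb.le⟩, Finset.mem_Icc.2 ⟨le_rfl, (hcb.trans hbd).le⟩⟩
  · exact absurd (Finset.mem_Icc.1 (h (Finset.left_mem_Icc.2 (hac.trans hcb).le))).1
      (not_le.2 hac)
  · exact absurd (Finset.mem_Icc.1 (h (Finset.right_mem_Icc.2 (hcb.trans hbd).le))).2
      (not_le.2 hbd)

theorem Icc_subset_or_subset {x : ℕ} (hxab : x ∈ Set.Icc a b) (hxcd : x ∈ Set.Icc c d) :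
    Set.Icc a b ⊆ Set.Icc c d ∨ Set.Icc c d ⊆ Set.Icc a b := by
  simp only [← Finset.coe_Icc, Finset.coe_subset]
  rcases hNC L hL M hM hLM a ha b hb c hc d hd (hxab.1.trans hxab.2) (hxcd.1.trans hxcd.2)
    with h | h | h
  · simpa [h] using Finset.mem_inter.2 ⟨Finset.mem_Icc.2 hxab, Finset.mem_Icc.2 hxcd⟩
  · exact .inl h
  · exact .inr h

end PairwiseNoncrossing

theorem mmInterval_eq {L : Finset ℕ} (h : L.Nonempty) :
    mmInterval L = Set.Icc (L.min' h) (L.max' h) := by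
  rw [mmInterval, h.csInf_eq_min', h.csSup_eq_max']

theorem mem_mmInterval_of_mem {L : Finset ℕ} {x : ℕ} (hx : x ∈ L) : x ∈ mmInterval L := by
  rw [mmInterval_eq ⟨x, hx⟩]
  exact ⟨L.min'_le x hx, L.le_max' x hx⟩

namespace IsNCP

variable {B : Finset ℕ} {P : Finset (Finset ℕ)} (hP : IsNCP B P) {L M : Finset ℕ}
  (hL : L ∈ P) (hM : M ∈ P)
include hP hL hM

theorem eq_of_mmInterval_eq (h : mmInterval L = mmInterval M) : L = M := by
  have hLne := hP.1.1 L hL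
  have hMne := hP.1.1 M hM
  rw [mmInterval_eq hLne, mmInterval_eq hMne,
    Set.Icc_eq_Icc_iff (L.min'_le _ (L.max'_mem hLne))] at h
  exact hP.1.eq_of_mem_of_mem_s9 hL hM (L.min'_mem hLne) (h.1 ▸ M.min'_mem hMne)

theorem notMem_mmInterval_of_ssubset {x : ℕ} (hxL : x ∈ L)
    (hML : mmInterval M ⊂ mmInterval L) : x ∉ mmInterval M := by
  have hLM : L ≠ M := by rintro rfl; exact hML.ne rfl
  have hLne := hP.1.1 L hL
  have hMne := hP.1.1 M hM
  have hxM : x ∉ M := fun hxM => hLM (hP.1.eq_of_mem_of_mem_s9 hL hM hxL hxM)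
  have hcd : M.min' hMne ≤ M.max' hMne := M.min'_le _ (M.max'_mem hMne)
  rw [mmInterval_eq hMne, mmInterval_eq hLne] at hML
  rw [mmInterval_eq hMne]
  obtain ⟨hpc, hdq⟩ := (Set.Icc_subset_Icc_iff hcd).1 hML.1
  rintro ⟨hcx_le, hxd_le⟩
  have hcx : M.min' hMne < x := hcx_le.lt_of_ne fun h => hxM (h ▸ M.min'_mem hMne)
  have hxd : x < M.max' hMne := hxd_le.lt_of_ne fun h => hxM (h ▸ M.max'_mem hMne)
  rcases hpc.lt_or_eq with hpc | hpc
  · exact hP.2.not_interleaved hL hM hLM (L.min'_mem hLne) hxL (M.min'_mem hMne)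
      (M.max'_mem hMne) hpc hcx hxd
  rcases hdq.lt_or_eq with hdq | hdq
  · exact hP.2.not_interleaved hM hL hLM.symm (M.min'_mem hMne) (M.max'_mem hMne) hxL
      (L.max'_mem hLne) hcx hxd hdq
  exact hML.ne (congrArg₂ Set.Icc hpc.symm hdq)

theorem mmInterval_ssubset_or_ssubset (hLM : L ≠ M) {x : ℕ} (hxL : x ∈ mmInterval L)
    (hxM : x ∈ mmInterval M) : mmInterval L ⊂ mmInterval M ∨ mmInterval M ⊂ mmInterval L := by
  have hne : mmInterval L ≠ mmInterval M := fun h => hLM (hP.eq_of_mmInterval_eq hL hM h)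
  have hLne := hP.1.1 L hL
  have hMne := hP.1.1 M hM
  have hnested := hP.2.Icc_subset_or_subset hL hM hLM (L.min'_mem hLne) (L.max'_mem hLne)
    (M.min'_mem hMne) (M.max'_mem hMne) (mmInterval_eq hLne ▸ hxL) (mmInterval_eq hMne ▸ hxM)
  rw [← mmInterval_eq, ← mmInterval_eq] at hnested
  exact hnested.imp (Set.ssubset_iff_subset_ne.2 ⟨·, hne⟩)
    (Set.ssubset_iff_subset_ne.2 ⟨·, hne.symm⟩)

end IsNCP

/-- Each block of a noncrossing partition equals the elements of `B` in its min–max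
interval that do not lie in any strictly smaller min–max interval of another block. -/
theorem stmt9 (B : Finset ℕ) (P : Finset (Finset ℕ)) (hP : IsNCP B P)
    (L : Finset ℕ) (hL : L ∈ P) :
    (L : Set ℕ) =
      ((B : Set ℕ) ∩ mmInterval L) \
        (⋃ L' ∈ P, ⋃ (_ : mmInterval L' ⊂ mmInterval L), mmInterval L') := by
  ext x
  simp only [Set.mem_sdiff, Set.mem_inter_iff, Set.mem_iUnion, Finset.mem_coe, not_exists]
  constructor
  · intro hxL
    exact ⟨⟨hP.1.2.1 L hL hxL, mem_mmInterval_of_mem hxL⟩,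
      fun M hM hML => hP.notMem_mmInterval_of_ssubset hL hM hxL hML⟩
  · rintro ⟨⟨hxB, hxL⟩, hnot⟩
    obtain ⟨M, ⟨hM, hxM⟩, -⟩ := hP.1.2.2 x hxB
    obtain rfl | hML := eq_or_ne M L
    · exact hxM
    rcases hP.mmInterval_ssubset_or_ssubset hM hL hML (mem_mmInterval_of_mem hxM) hxL with h | h
    · exact absurd (mem_mmInterval_of_mem hxM) (hnot M hM h)
    · exact absurd hxL (hP.notMem_mmInterval_of_ssubset hM hL hxM h)
end

section
/- Let p : ℕ → ℕ be a finitely supported function (p_i is the multiplicity of the part i in a partition). For i ≥ 0 set q_i = Σ_{j > i, j ≢ i (mod 2)} p_j. Then Σ_{i ≥ 1} i · p_i · (Σ_{j > i, j ≢ i (mod 2)} p_j) = Σ_{i ≥ 0} q_i · q_{i+1}, where all sums are finite since p is finitely supported. -/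
/-- `qfun p i = Σ_{j > i, j ≢ i (mod 2)} p j` (a finite sum since `p` is finitely
supported): the dimension of the weight-`i` space of the associated
`sl₂`-representation. -/
noncomputable def qfun (p : ℕ → ℕ) (i : ℕ) : ℕ :=
  ∑ᶠ j, if i < j ∧ j % 2 ≠ i % 2 then p j else 0

/-- The arithmetic identity of Lemma 3.3:
`Σ_{i ≥ 1} i · p_i · (Σ_{j > i, j ≢ i (2)} p_j) = Σ_{i ≥ 0} q_i · q_{i+1}`. -/
theorem stmt13 (p : ℕ → ℕ) (hp : (Function.support p).Finite) :
    ∑ᶠ i, i * p i * qfun p i = ∑ᶠ i, qfun p i * qfun p (i + 1) := by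
  obtain ⟨N, hN⟩ : ∃ N, ∀ j, N ≤ j → p j = 0 := by
    obtain ⟨B, hB⟩ := hp.bddAbove
    refine ⟨B + 1, fun j hj => ?_⟩
    by_contra h
    exact absurd (hB (by simpa [Function.mem_support] using h)) (by omega)
  set q := qfun p with hq
  have qsum : ∀ i, q i = ∑ j ∈ Finset.range N,
      if i < j ∧ j % 2 ≠ i % 2 then p j else 0 := by
    intro i
    apply finsum_eq_sum_of_support_subset
    intro j hj
    simp only [Function.mem_support] at hj
    simp only [Finset.coe_range, Set.mem_Iio]
    by_contra h
    exact hj (by rw [hN j (by omega)]; split <;> rfl)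
  have qzero : ∀ i, N ≤ i → q i = 0 := by
    intro i hi
    rw [qsum i]
    apply Finset.sum_eq_zero
    intro j hj
    simp only [Finset.mem_range] at hj
    have : ¬ (i < j ∧ j % 2 ≠ i % 2) := by omega
    simp [this]
  have qrec : ∀ i, q i = p (i + 1) + q (i + 2) := by
    intro i
    have key : ∀ j, (if i < j ∧ j % 2 ≠ i % 2 then p j else 0)
        = (if j = i + 1 then p j else 0)
          + (if i + 2 < j ∧ j % 2 ≠ (i + 2) % 2 then p j else 0) := by
      intro j
      split_ifs <;> omega
    rw [qsum i, qsum (i + 2), Finset.sum_congr rfl (fun j _ => key j),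
      Finset.sum_add_distrib, Finset.sum_ite_eq' (Finset.range N) (i + 1) p]
    split_ifs with h
    · rfl
    · rw [hN (i + 1) (by simp at h; omega)]
  have hL : ∑ᶠ i, i * p i * q i = ∑ i ∈ Finset.range (N + 1), i * p i * q i := by
    apply finsum_eq_sum_of_support_subset
    intro i hi
    simp only [Function.mem_support] at hi
    simp only [Finset.coe_range, Set.mem_Iio]
    by_contra h
    exact hi (by rw [hN i (by omega)]; ring)
  have hR : ∑ᶠ i, q i * q (i + 1) = ∑ i ∈ Finset.range (N + 1), q i * q (i + 1) := by
    apply finsum_eq_sum_of_support_subset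
    intro i hi
    simp only [Function.mem_support] at hi
    simp only [Finset.coe_range, Set.mem_Iio]
    by_contra h
    exact hi (by rw [qzero i (by omega)]; ring)
  rw [hL, hR]
  rw [Finset.sum_range_succ' (fun i => i * p i * q i) N,
      Finset.sum_range_succ' (fun i => q i * q (i + 1)) N]
  simp only [Nat.zero_mul, Nat.add_zero, Nat.mul_zero, zero_mul, mul_zero, add_zero, zero_add, one_mul]
  -- goal: ∑ i in range N, (i+1) * p (i+1) * q (i+1)
  --     = ∑ i in range N, q (i+1) * q (i+2) + q 0 * q 1
  have main : (∑ i ∈ Finset.range N, (i + 1) * p (i + 1) * q (i + 1))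
      + ∑ i ∈ Finset.range N, (i + 1 + 1) * q (i + 1) * q (i + 1 + 1)
      = (∑ i ∈ Finset.range N, (i + 1) * q i * q (i + 1))
      + ∑ i ∈ Finset.range N, q (i + 1) * q (i + 1 + 1) := by
    rw [← Finset.sum_add_distrib, ← Finset.sum_add_distrib]
    refine Finset.sum_congr rfl fun i _ => ?_
    rw [qrec i]; ring
  have hG : ∑ i ∈ Finset.range N, (i + 1) * q i * q (i + 1)
      = (∑ i ∈ Finset.range N, (i + 1 + 1) * q (i + 1) * q (i + 1 + 1))
        + q 0 * q 1 := by
    have h1 := Finset.sum_range_succ' (fun i => (i + 1) * q i * q (i + 1)) N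
    have h2 := Finset.sum_range_succ (fun i => (i + 1) * q i * q (i + 1)) N
    simp only [qzero N le_rfl, mul_zero, zero_mul, add_zero, zero_add, one_mul] at h1 h2 ⊢
    omega
  omega
end
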